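/- arXiv:1505.03306 — 6 statements merged into one kernel-verified Lean document; each statement's English description precedes it below -/
import Mathlib

section
/- Let s_*, s^* ∈ S, let T, N ∈ ℕ and λ > 0, and let m = (m_0,…,m_T) ∈ M_N^{T+1} be a minimizer of the discrete energy ℰ(T, N, λ). Define a chain (s_i)_{i=0}^T of measure-preserving maps by s_0 = s_*, s_T = s^*, and, for 1 ≤ i < T, let s_i ∈ S be any element satisfying ‖m_i − s_i‖ = inf_{s ∈ S} ‖m_i − s‖ (a projection of m_i onto S). Then T · Σ_{0≤i<T} ‖s_{i+1} − s_i‖² ≤ (1 + 4T/λ) · ℰ(T, N, λ). -/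
open MeasureTheory Set
open scoped ENNReal NNReal

noncomputable section

abbrev Euc (d : ℕ) := EuclideanSpace ℝ (Fin d)

/-- The unit interval `[0,1]` as a subtype. -/
abbrev UnitInt := ↥(Set.Icc (0 : ℝ) 1)

/-- The space `Ω = C⁰([0,1], ℝ^d)` of continuous paths. -/
abbrev PathSp (d : ℕ) := C(UnitInt, Euc d)

instance (d : ℕ) : MeasurableSpace (PathSp d) := borel _
instance (d : ℕ) : BorelSpace (PathSp d) := ⟨rfl⟩

def t0 : UnitInt := ⟨0, by constructor <;> norm_num⟩
def t1 : UnitInt := ⟨1, by constructor <;> norm_num⟩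

/-- The action `A(ω) = ∫₀¹ |ω̇|²`, expressed as the supremum over partitions
`0 = t_0 ≤ … ≤ t_n = 1` of `Σ_i |ω(t_{i+1}) − ω(t_i)|²/(t_{i+1} − t_i)`; it equals
`∫₀¹|ω̇(t)|² dt` when `ω ∈ H¹([0,1], ℝ^d)` and `+∞` otherwise. -/
def action {d : ℕ} (ω : PathSp d) : ℝ≥0∞ :=
  ⨆ (n : ℕ) (t : Fin (n + 1) → UnitInt)
    (_ : Monotone (fun i => (t i : ℝ)) ∧ t 0 = t0 ∧ t (Fin.last n) = t1),
    ∑ i : Fin n, (‖ω (t i.succ) - ω (t i.castSucc)‖₊ : ℝ≥0∞) ^ 2 /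
      ENNReal.ofReal ((t i.succ : ℝ) - (t i.castSucc : ℝ))

/-- The set `S` of measure-preserving maps of `X`. -/
def SPres {d : ℕ} (X : Set (Euc d)) (Leb : Measure (Euc d)) : Set (Euc d → Euc d) :=
  {s | Measurable s ∧ Set.MapsTo s X X ∧ Measure.map s Leb = Leb}

/-- Squared `L²(X, ℝ^d)` distance between two maps. -/
def dsq {d : ℕ} (Leb : Measure (Euc d)) (f g : Euc d → Euc d) : ℝ :=
  ∫ x, ‖f x - g x‖ ^ 2 ∂Leb

/-- The subspace `M_N` of maps which are constant on each region of the partition `P`. -/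
def MNsp {d N : ℕ} (P : Fin N → Set (Euc d)) : Set (Euc d → Euc d) :=
  {m | ∀ j, ∃ v, ∀ x ∈ P j, m x = v}

/-- The discrete energy of a chain `m = (m_0, …, m_T)`. -/
def energyFun {d : ℕ} (X : Set (Euc d)) (Leb : Measure (Euc d))
    (sStar sStarStar : Euc d → Euc d) (T : ℕ) (lam : ℝ) (m : ℕ → Euc d → Euc d) : ℝ :=
  (T : ℝ) * ∑ i ∈ Finset.range T, dsq Leb (m (i + 1)) (m i) +
    lam * (dsq Leb (m 0) sStar + dsq Leb (m T) sStarStar +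
      ∑ i ∈ Finset.Ico 1 T, sInf ((fun s => dsq Leb (m i) s) '' (SPres X Leb)))

/-- The discretized minimum `ℰ(T, N, λ)`. -/
def calE {d : ℕ} (X : Set (Euc d)) (Leb : Measure (Euc d))
    (P : (N : ℕ) → Fin N → Set (Euc d))
    (sStar sStarStar : Euc d → Euc d) (T N : ℕ) (lam : ℝ) : ℝ :=
  sInf {E : ℝ | ∃ m : ℕ → Euc d → Euc d, (∀ i ≤ T, m i ∈ MNsp (P N)) ∧
    E = energyFun X Leb sStar sStarStar T lam m}

/-- The admissible generalized flows: probability measures on `Ω` concentrated on paths with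
values in `X`, with prescribed endpoint coupling and incompressible at each time. -/
def Admissible {d : ℕ} (X : Set (Euc d)) (Leb : Measure (Euc d))
    (sStar sStarStar : Euc d → Euc d) : Set (Measure (PathSp d)) :=
  {μ | IsProbabilityMeasure μ ∧ (∀ᵐ ω ∂μ, ∀ t, ω t ∈ X) ∧
    μ.map (fun ω => (ω t0, ω t1)) = Leb.map (fun x => (sStar x, sStarStar x)) ∧
    ∀ t : UnitInt, μ.map (fun ω => ω t) = Leb}

/-- The relaxed squared geodesic distance `d²(s_*, s^*)`. -/
def relaxedDistSq {d : ℕ} (X : Set (Euc d)) (Leb : Measure (Euc d))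
    (sStar sStarStar : Euc d → Euc d) : ℝ≥0∞ :=
  ⨅ (μ : Measure (PathSp d)) (_ : μ ∈ Admissible X Leb sStar sStarStar),
    ∫⁻ ω, action ω ∂μ



open scoped RealInnerProductSpace in
lemma alg_ineq' {a b c x t : ℝ} (ha : 0 ≤ a) (hb : 0 ≤ b) (hc : 0 ≤ c) (hx : 0 ≤ x)
    (ht : 0 < t) (h : x ≤ a + b + c) :
    x ^ 2 ≤ (1 + t) * b ^ 2 + 2 * (1 + 1 / t) * (c ^ 2 + a ^ 2) := by
  have h1 : x ^ 2 ≤ (a + b + c) ^ 2 := by nlinarith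
  have hrhs : t * ((1 + t) * b ^ 2 + 2 * (1 + 1 / t) * (c ^ 2 + a ^ 2)) =
      t * (1 + t) * b ^ 2 + (2 * t + 2) * (c ^ 2 + a ^ 2) := by
    field_simp
  have h2 : t * ((a + b + c) ^ 2) ≤ t * ((1 + t) * b ^ 2 + 2 * (1 + 1 / t) * (c ^ 2 + a ^ 2)) := by
    rw [hrhs]
    nlinarith [sq_nonneg (t * b - (a + c)), mul_nonneg ht.le (sq_nonneg (a - c)), sq_nonneg (a - c)]
  have h3 := (mul_le_mul_iff_right₀ ht).mp h2
  linarith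

open scoped RealInnerProductSpace in
lemma dsq_eq_norm_sub_sq {d : ℕ} (μ : Measure (Euc d)) {f g : Euc d → Euc d}
    (hf : MemLp f 2 μ) (hg : MemLp g 2 μ) :
    dsq μ f g = ‖hf.toLp f - hg.toLp g‖ ^ 2 := by
  set F := hf.toLp f
  set G := hg.toLp g
  have hcoe : (↑↑(F - G) : Euc d → Euc d) =ᵐ[μ] fun x => f x - g x := by
    filter_upwards [Lp.coeFn_sub F G, hf.coeFn_toLp, hg.coeFn_toLp] with x h1 h2 h3
    rw [h1, Pi.sub_apply]; exact congrArg₂ (· - ·) h2 h3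
  rw [← real_inner_self_eq_norm_sq, MeasureTheory.L2.inner_def]
  unfold dsq
  refine (integral_congr_ae ?_).symm
  filter_upwards [hcoe] with x hx
  rw [hx, real_inner_self_eq_norm_sq]

lemma dsq_nonneg' {d : ℕ} (μ : Measure (Euc d)) (f g : Euc d → Euc d) : 0 ≤ dsq μ f g :=
  integral_nonneg fun x => by positivity

/-- **classical construction.** Let `m = (m_0,…,m_T)` be a minimizer of the
discrete energy `ℰ(T,N,λ)`, and let `(s_i)` be the chain with `s_0 = s_*`, `s_T = s^*`, and
`s_i` a projection of `m_i` onto `S` for `1 ≤ i < T`. Then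
`T·Σ ‖s_{i+1} − s_i‖² ≤ (1 + 4T/λ)·ℰ(T,N,λ)`. -/
theorem stmt_2 {d : ℕ} (hd : 1 ≤ d)
    (X : Set (Euc d)) (hX : IsCompact X) (hXpos : 0 < volume X)
    (Leb : Measure (Euc d)) (hprob : IsProbabilityMeasure Leb)
    (hLeb : Leb = (volume X)⁻¹ • volume.restrict X)
    (CP : ℝ) (P : (N : ℕ) → Fin N → Set (Euc d))
    (hP : ∀ N : ℕ, 1 ≤ N →
      (∀ j, MeasurableSet (P N j) ∧ Leb (P N j) = 1 / N ∧
        Metric.diam (P N j) ≤ CP * (N : ℝ) ^ (-(1 : ℝ) / d)) ∧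
      Pairwise (Function.onFun Disjoint (P N)) ∧ (⋃ j, P N j) = X)
    (sStar sStarStar : Euc d → Euc d)
    (hsStar : sStar ∈ SPres X Leb) (hsStarStar : sStarStar ∈ SPres X Leb)
    (T N : ℕ) (hT : 1 ≤ T) (hN : 1 ≤ N) (lam : ℝ) (hlam : 0 < lam)
    -- `m` is a minimizer of the discrete energy
    (m : ℕ → Euc d → Euc d) (hmmem : ∀ i ≤ T, m i ∈ MNsp (P N))
    (hmmin : energyFun X Leb sStar sStarStar T lam m = calE X Leb P sStar sStarStar T N lam)
    -- the chain of incompressible maps `(s_i)`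
    (s : ℕ → Euc d → Euc d) (hs0 : s 0 = sStar) (hsT : s T = sStarStar)
    (hproj : ∀ i, 1 ≤ i → i < T → s i ∈ SPres X Leb ∧
      dsq Leb (m i) (s i) = sInf ((fun σ => dsq Leb (m i) σ) '' (SPres X Leb))) :
    (T : ℝ) * ∑ i ∈ Finset.range T, dsq Leb (s (i + 1)) (s i) ≤
      (1 + 4 * T / lam) * calE X Leb P sStar sStarStar T N lam := by
  classical
  have hT0 : (0:ℝ) < T := by exact_mod_cast hT
  set t : ℝ := 4 * T / lam with htdef
  have ht : 0 < t := by positivity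
  -- a.e. every point is in X
  have haeX : ∀ᵐ x ∂Leb, x ∈ X := by
    have hc : Leb Xᶜ = 0 := by
      rw [hLeb, Measure.smul_apply,
        Measure.restrict_apply (hX.isClosed.measurableSet.compl)]
      simp
    rw [MeasureTheory.ae_iff]
    simpa [Set.compl_def] using hc
  -- s i is measure preserving for all i ≤ T
  have hsS : ∀ i ≤ T, s i ∈ SPres X Leb := by
    intro i hi
    rcases Nat.lt_or_ge i 1 with h1 | h1
    · have : i = 0 := Nat.lt_one_iff.mp h1
      rw [this, hs0]; exact hsStar
    rcases lt_or_eq_of_le hi with h2 | h2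
    · exact (hproj i h1 h2).1
    · rw [h2, hsT]; exact hsStarStar
  -- bound on X
  obtain ⟨R, hR⟩ : ∃ R, ∀ x ∈ X, ‖x‖ ≤ R :=
    isBounded_iff_forall_norm_le.mp hX.isBounded
  -- MemLp for s i
  have hs2 : ∀ i ≤ T, MemLp (s i) 2 Leb := by
    intro i hi
    obtain ⟨hmeas, hmaps, -⟩ := hsS i hi
    exact MemLp.of_bound hmeas.aestronglyMeasurable R
      (by filter_upwards [haeX] with x hx; exact hR _ (hmaps hx))
  -- MemLp for m i
  have hm2 : ∀ i ≤ T, MemLp (m i) 2 Leb := by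
    intro i hi
    obtain ⟨v, hv⟩ := Classical.axiomOfChoice (hmmem i hi)
    haveI : Nonempty (Fin N) := Fin.pos_iff_nonempty.mp hN
    set g : Euc d → Euc d := fun x => ∑ j : Fin N, (P N j).indicator (fun _ => v j) x with hg
    have hgmeas : Measurable g := by
      apply Finset.measurable_sum
      intro j _
      exact measurable_const.indicator ((hP N hN).1 j).1
    have hmg : ∀ x ∈ X, m i x = g x := by
      intro x hx
      rw [← (hP N hN).2.2] at hx
      obtain ⟨j₀, hj₀⟩ := Set.mem_iUnion.mp hx
      have hgx : g x = v j₀ := by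
        show ∑ j : Fin N, (P N j).indicator (fun _ => v j) x = v j₀
        rw [Finset.sum_eq_single j₀]
        · exact Set.indicator_of_mem hj₀ _
        · intro j _ hne
          apply Set.indicator_of_notMem
          intro hxj
          exact (Set.disjoint_left.mp ((hP N hN).2.1 hne) hxj) hj₀
        · intro h; exact absurd (Finset.mem_univ j₀) h
      rw [hgx, hv j₀ x hj₀]
    have hae : m i =ᵐ[Leb] g := by
      filter_upwards [haeX] with x hx using hmg x hx
    refine MemLp.of_bound (hgmeas.aestronglyMeasurable.congr hae.symm)
      (Finset.univ.sup' Finset.univ_nonempty (fun j => ‖v j‖)) ?_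
    filter_upwards [haeX] with x hx
    have hx' := hx
    rw [← (hP N hN).2.2] at hx'
    obtain ⟨j₀, hj₀⟩ := Set.mem_iUnion.mp hx'
    rw [hv j₀ x hj₀]
    exact Finset.le_sup' (fun j => ‖v j‖) (Finset.mem_univ j₀)
  -- abbreviations
  set A : ℕ → ℝ := fun i => dsq Leb (m i) (s i) with hA
  set B : ℕ → ℝ := fun i => dsq Leb (m (i + 1)) (m i) with hB
  set D : ℕ → ℝ := fun i => dsq Leb (s (i + 1)) (s i) with hD
  have hAnn : ∀ i, 0 ≤ A i := fun i => dsq_nonneg' _ _ _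
  have hBnn : ∀ i, 0 ≤ B i := fun i => dsq_nonneg' _ _ _
  -- edge inequality
  have hedge : ∀ i < T, D i ≤ (1 + t) * B i + 2 * (1 + 1 / t) * (A i + A (i + 1)) := by
    intro i hi
    have hi1 : i + 1 ≤ T := hi
    have hi0 : i ≤ T := le_of_lt hi
    have hFi := hm2 i hi0
    have hFi1 := hm2 (i + 1) hi1
    have hSi := hs2 i hi0
    have hSi1 := hs2 (i + 1) hi1
    have hDval : D i = ‖hSi1.toLp (s (i+1)) - hSi.toLp (s i)‖ ^ 2 :=
      dsq_eq_norm_sub_sq Leb hSi1 hSi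
    have hBval : B i = ‖hFi1.toLp (m (i+1)) - hFi.toLp (m i)‖ ^ 2 :=
      dsq_eq_norm_sub_sq Leb hFi1 hFi
    have hAval : A i = ‖hFi.toLp (m i) - hSi.toLp (s i)‖ ^ 2 :=
      dsq_eq_norm_sub_sq Leb hFi hSi
    have hAval1 : A (i+1) = ‖hFi1.toLp (m (i+1)) - hSi1.toLp (s (i+1))‖ ^ 2 :=
      dsq_eq_norm_sub_sq Leb hFi1 hSi1
    set S0 := hSi.toLp (s i)
    set S1 := hSi1.toLp (s (i+1))
    set F0 := hFi.toLp (m i)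
    set F1 := hFi1.toLp (m (i+1))
    have htri : ‖S1 - S0‖ ≤ ‖F1 - S1‖ + ‖F1 - F0‖ + ‖F0 - S0‖ := by
      have heq : S1 - S0 = (S1 - F1) + (F1 - F0) + (F0 - S0) := by abel
      calc ‖S1 - S0‖ = ‖(S1 - F1) + (F1 - F0) + (F0 - S0)‖ := by rw [heq]
        _ ≤ ‖(S1 - F1) + (F1 - F0)‖ + ‖F0 - S0‖ := norm_add_le _ _
        _ ≤ ‖S1 - F1‖ + ‖F1 - F0‖ + ‖F0 - S0‖ := by
            have := norm_add_le (S1 - F1) (F1 - F0); linarith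
        _ = ‖F1 - S1‖ + ‖F1 - F0‖ + ‖F0 - S0‖ := by rw [norm_sub_rev S1 F1]
    rw [hDval, hAval, hAval1, hBval]
    exact alg_ineq' (norm_nonneg _) (norm_nonneg _) (norm_nonneg _) (norm_nonneg _) ht htri
  -- sums
  set Kv : ℝ := ∑ i ∈ Finset.range T, B i with hKv
  set Pv : ℝ := A 0 + A T + ∑ i ∈ Finset.Ico 1 T, A i with hPv
  have hsplit : ∑ i ∈ Finset.range T, A i = A 0 + ∑ i ∈ Finset.Ico 1 T, A i := by
    rw [Finset.range_eq_Ico, Finset.sum_eq_sum_Ico_succ_bot hT]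
  have hshift : ∑ i ∈ Finset.range T, A (i + 1) = ∑ i ∈ Finset.range T, A i + A T - A 0 := by
    have h1 : ∑ i ∈ Finset.range (T + 1), A i = ∑ i ∈ Finset.range T, A (i + 1) + A 0 :=
      Finset.sum_range_succ' A T
    have h2 : ∑ i ∈ Finset.range (T + 1), A i = ∑ i ∈ Finset.range T, A i + A T :=
      Finset.sum_range_succ A T
    linarith
  have hPsum : ∑ i ∈ Finset.range T, (A i + A (i + 1)) ≤ 2 * Pv := by
    rw [Finset.sum_add_distrib, hshift, hsplit]
    have h0 := hAnn 0
    have hTn := hAnn T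
    rw [hPv]; linarith
  -- energy identity
  have hEid : energyFun X Leb sStar sStarStar T lam m = T * Kv + lam * Pv := by
    have hsum : ∑ i ∈ Finset.Ico 1 T, sInf ((fun s => dsq Leb (m i) s) '' (SPres X Leb)) =
        ∑ i ∈ Finset.Ico 1 T, dsq Leb (m i) (s i) := by
      refine Finset.sum_congr rfl fun i hi => ?_
      obtain ⟨h1, h2⟩ := Finset.mem_Ico.mp hi
      exact ((hproj i h1 h2).2).symm
    rw [energyFun, hKv, hPv]
    simp only [hA, hB]
    rw [hs0, hsT, hsum]
  -- main chain
  have hmain : (T : ℝ) * ∑ i ∈ Finset.range T, D i ≤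
      (1 + 4 * T / lam) * (T * Kv + lam * Pv) := by
    have hstep : ∑ i ∈ Finset.range T, D i ≤
        (1 + t) * Kv + 2 * (1 + 1 / t) * (2 * Pv) := by
      calc ∑ i ∈ Finset.range T, D i
          ≤ ∑ i ∈ Finset.range T, ((1 + t) * B i + 2 * (1 + 1 / t) * (A i + A (i + 1))) :=
            Finset.sum_le_sum fun i hi => hedge i (Finset.mem_range.mp hi)
        _ = (1 + t) * Kv + 2 * (1 + 1 / t) * ∑ i ∈ Finset.range T, (A i + A (i + 1)) := by
            rw [Finset.sum_add_distrib, ← Finset.mul_sum, ← Finset.mul_sum]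
        _ ≤ (1 + t) * Kv + 2 * (1 + 1 / t) * (2 * Pv) := by
            have hcoef : (0:ℝ) ≤ 2 * (1 + 1 / t) := by positivity
            have := mul_le_mul_of_nonneg_left hPsum hcoef
            linarith
    have heqfinal : (T : ℝ) * ((1 + t) * Kv + 2 * (1 + 1 / t) * (2 * Pv)) =
        (1 + 4 * T / lam) * (T * Kv + lam * Pv) := by
      rw [htdef]
      field_simp
      ring
    calc (T : ℝ) * ∑ i ∈ Finset.range T, D i
        ≤ (T : ℝ) * ((1 + t) * Kv + 2 * (1 + 1 / t) * (2 * Pv)) :=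
          mul_le_mul_of_nonneg_left hstep hT0.le
      _ = (1 + 4 * T / lam) * (T * Kv + lam * Pv) := heqfinal
  rw [← hmmin, hEid]
  exact hmain


end
end

section
/- Let H be a real Hilbert space, let T ∈ ℕ with T ≥ 1, let λ > 0, and let (m_i)_{i=0}^T and (s_i)_{i=0}^T be elements of H. Then T · Σ_{0≤i<T} ‖s_{i+1} − s_i‖² ≤ (1 + 4T/λ) · [ T · Σ_{0≤i<T} ‖m_{i+1} − m_i‖² + λ · Σ_{0≤i≤T} ‖m_i − s_i‖² ]. -/
/-!
Write `eᵢ = mᵢ - sᵢ`, so that `sᵢ₊₁ - sᵢ = (mᵢ₊₁ - mᵢ) + (eᵢ - eᵢ₊₁)`. The weighted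
inequality `‖a + b‖² ≤ (1 + t)‖a‖² + (1 + t⁻¹)‖b‖²` together with
`‖eᵢ - eᵢ₊₁‖² ≤ 2(‖eᵢ‖² + ‖eᵢ₊₁‖²)` bounds each increment of `s`; summing, every `‖eᵢ‖²`
is counted at most twice, and the weight `t = 4T/λ` balances the two sums into the stated form.
-/

open Finset

lemma add_sq_le_weighted {x y t : ℝ} (ht : 0 < t) :
    (x + y) ^ 2 ≤ (1 + t) * x ^ 2 + (1 + t⁻¹) * y ^ 2 := by
  have key : 0 ≤ t⁻¹ * (t * x - y) ^ 2 := by positivity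
  have expand : t⁻¹ * (t * x - y) ^ 2 = t * x ^ 2 - 2 * x * y + t⁻¹ * y ^ 2 := by
    field_simp
    ring
  nlinarith

lemma norm_add_sq_le_weighted {E : Type*} [SeminormedAddCommGroup E] (a b : E) {t : ℝ}
    (ht : 0 < t) : ‖a + b‖ ^ 2 ≤ (1 + t) * ‖a‖ ^ 2 + (1 + t⁻¹) * ‖b‖ ^ 2 :=
  (pow_le_pow_left₀ (norm_nonneg _) (norm_add_le a b) 2).trans
    (add_sq_le_weighted ht)

lemma norm_sub_sq_le {E : Type*} [SeminormedAddCommGroup E] (a b : E) :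
    ‖a - b‖ ^ 2 ≤ 2 * (‖a‖ ^ 2 + ‖b‖ ^ 2) :=
  (pow_le_pow_left₀ (norm_nonneg _) (norm_sub_le a b) 2).trans add_sq_le

lemma sum_range_add_succ_le {f : ℕ → ℝ} (hf : ∀ i, 0 ≤ f i) (T : ℕ) :
    ∑ i ∈ range T, (f i + f (i + 1)) ≤ 2 * ∑ i ∈ range (T + 1), f i := by
  rw [sum_add_distrib, two_mul]
  refine add_le_add ?_ ?_
  · exact sum_le_sum_of_subset_of_nonneg (range_subset_range.mpr T.le_succ)
      fun i _ _ => hf i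
  · rw [sum_range_succ' f T]
    linarith [hf 0]

lemma sum_norm_sub_succ_sq_le {E : Type*} [SeminormedAddCommGroup E] (m s : ℕ → E) (T : ℕ)
    {t : ℝ} (ht : 0 < t) :
    ∑ i ∈ range T, ‖s (i + 1) - s i‖ ^ 2 ≤
      (1 + t) * ∑ i ∈ range T, ‖m (i + 1) - m i‖ ^ 2
        + 4 * (1 + t⁻¹) * ∑ i ∈ range (T + 1), ‖m i - s i‖ ^ 2 := by
  set e : ℕ → ℝ := fun i => ‖m i - s i‖ ^ 2
  have step (i : ℕ) : ‖s (i + 1) - s i‖ ^ 2 ≤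
      (1 + t) * ‖m (i + 1) - m i‖ ^ 2 + 2 * (1 + t⁻¹) * (e i + e (i + 1)) := by
    have split :
        s (i + 1) - s i = (m (i + 1) - m i) + ((m i - s i) - (m (i + 1) - s (i + 1))) := by
      abel
    rw [split]
    refine (norm_add_sq_le_weighted _ _ ht).trans ?_
    have := norm_sub_sq_le (m i - s i) (m (i + 1) - s (i + 1))
    have : 0 ≤ 1 + t⁻¹ := by positivity
    nlinarith
  have shift := sum_range_add_succ_le (f := e) (fun i => by positivity) T
  calc ∑ i ∈ range T, ‖s (i + 1) - s i‖ ^ 2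
      ≤ ∑ i ∈ range T,
          ((1 + t) * ‖m (i + 1) - m i‖ ^ 2 + 2 * (1 + t⁻¹) * (e i + e (i + 1))) :=
        sum_le_sum fun i _ => step i
    _ = (1 + t) * ∑ i ∈ range T, ‖m (i + 1) - m i‖ ^ 2
          + 2 * (1 + t⁻¹) * ∑ i ∈ range T, (e i + e (i + 1)) := by
        rw [sum_add_distrib, mul_sum, mul_sum]
    _ ≤ (1 + t) * ∑ i ∈ range T, ‖m (i + 1) - m i‖ ^ 2
          + 4 * (1 + t⁻¹) * ∑ i ∈ range (T + 1), e i := by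
        have : 0 ≤ 1 + t⁻¹ := by positivity
        nlinarith

theorem stmt_5_general {H : Type*} [NormedAddCommGroup H]
    (T : ℕ) (hT : 1 ≤ T) (lam : ℝ) (hlam : 0 < lam) (m s : ℕ → H) :
    (T : ℝ) * ∑ i ∈ Finset.range T, ‖s (i + 1) - s i‖ ^ 2 ≤
      (1 + 4 * T / lam) *
        ((T : ℝ) * ∑ i ∈ Finset.range T, ‖m (i + 1) - m i‖ ^ 2
          + lam * ∑ i ∈ Finset.range (T + 1), ‖m i - s i‖ ^ 2) := by
  have hT0 : (0 : ℝ) < T := by exact_mod_cast hT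
  have chain := sum_norm_sub_succ_sq_le m s T (t := 4 * T / lam) (by positivity)
  have weights : (T : ℝ) * (4 * (1 + (4 * T / lam)⁻¹)) = (1 + 4 * T / lam) * lam := by
    field_simp
    ring
  calc (T : ℝ) * ∑ i ∈ range T, ‖s (i + 1) - s i‖ ^ 2
      ≤ T * ((1 + 4 * T / lam) * ∑ i ∈ range T, ‖m (i + 1) - m i‖ ^ 2
          + 4 * (1 + (4 * T / lam)⁻¹) * ∑ i ∈ range (T + 1), ‖m i - s i‖ ^ 2) :=
        mul_le_mul_of_nonneg_left chain hT0.le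
    _ = _ := by rw [mul_add, ← mul_assoc, ← mul_assoc, weights]; ring

/-- Length of a chain: for elements `(m_i)` and `(s_i)` of a real Hilbert
space, `T · Σ_{0≤i<T} ‖s_{i+1} − s_i‖² ≤ (1 + 4T/λ) · [T · Σ ‖m_{i+1} − m_i‖² + λ · Σ ‖m_i − s_i‖²]`. -/
theorem stmt_5 {H : Type*} [NormedAddCommGroup H] [InnerProductSpace ℝ H] [CompleteSpace H]
    (T : ℕ) (hT : 1 ≤ T) (lam : ℝ) (hlam : 0 < lam) (m s : ℕ → H) :
    (T : ℝ) * ∑ i ∈ Finset.range T, ‖s (i + 1) - s i‖ ^ 2 ≤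
      (1 + 4 * T / lam) *
        ((T : ℝ) * ∑ i ∈ Finset.range T, ‖m (i + 1) - m i‖ ^ 2
          + lam * ∑ i ∈ Finset.range (T + 1), ‖m i - s i‖ ^ 2) :=
  stmt_5_general T hT lam hlam m s
end

section
/- Let H be a metric space, let Γ ⊆ H, and let μ be a probability measure on H supported on Γ. Then for every N ∈ ℕ with N ≥ 1, h_N(μ)² ≤ (4/N) · Σ_{1≤i≤N} r_i(Γ)². Equivalently, there exist points ω_1, …, ω_N ∈ H and nonnegative measures ν_1, …, ν_N on H, each of total mass 1/N and with ν_i supported in the closed ball of center ω_i and radius 2·r_i(Γ), such that μ = Σ_{1≤i≤N} ν_i; consequently W₂(μ, (1/N)Σ_i δ_{ω_i})² ≤ (1/N) Σ_{1≤i≤N} (2 r_i(Γ))². -/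
open MeasureTheory
open scoped ENNReal NNReal

noncomputable section

/-- Squared quadratic Wasserstein distance. -/
def W2sq {α : Type*} [MeasurableSpace α] [PseudoEMetricSpace α] (η ν : Measure α) : ℝ≥0∞ :=
  ⨅ (π : Measure (α × α)) (_ : π.map Prod.fst = η ∧ π.map Prod.snd = ν),
    ∫⁻ p, edist p.1 p.2 ^ 2 ∂π

/-- Optimal quantization error `h_N(μ)`. -/
def hN {α : Type*} [MeasurableSpace α] [PseudoEMetricSpace α] (μ : Measure α) (N : ℕ) : ℝ≥0∞ :=
  ⨅ ω : Fin N → α, (W2sq μ ((N : ℝ≥0∞)⁻¹ • ∑ j, Measure.dirac (ω j))) ^ (1 / 2 : ℝ)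

/-- Covering radius `r_N(Γ)`: the smallest `r` such that `Γ` is covered by `N` closed balls
of radius `r`. -/
def rN {α : Type*} [PseudoEMetricSpace α] (Γ : Set α) (N : ℕ) : ℝ≥0∞ :=
  ⨅ ω : Fin N → α, sInf {r : ℝ≥0∞ | Γ ⊆ ⋃ j, {x | edist x (ω j) ≤ r}}

/-! Greedy decomposition. A measure of mass `k/N` concentrated on `Γ` is carried by `k` closed
balls of radius `2 r_k(Γ)` covering `Γ` (the factor `2` absorbs the infimum in `r_k` not being
attained; when `r_k(Γ) = 0`, `Γ` has at most `k` points), so one of these balls has mass at least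
`1/N`. Cutting a piece of mass exactly `1/N` out of it and recursing on the remaining mass
`(k-1)/N` writes `μ = Σ ν_i` with `ν_i` of mass `1/N` supported in `B(ω_i, 2 r_i(Γ))`. Sending
each `ν_i` to the Dirac mass at `ω_i` couples `μ` with `(1/N) Σ δ_{ω_i}` at cost at most
`(1/N) Σ (2 r_i(Γ))²`. -/

open Set Metric

section Covering

variable {H : Type*}

lemma exists_cover_eball_of_rN_lt [PseudoEMetricSpace H] {Γ : Set H} {i : ℕ} {ρ : ℝ≥0∞}
    (h : rN Γ i < ρ) : ∃ ω : Fin i → H, Γ ⊆ ⋃ j, eball (ω j) ρ := by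
  obtain ⟨ω, hω⟩ := iInf_lt_iff.mp h
  obtain ⟨r, hr, hrρ⟩ := sInf_lt_iff.mp hω
  exact ⟨ω, hr.trans (iUnion_mono fun j x hx => lt_of_le_of_lt hx hrρ)⟩

lemma encard_le_of_rN_eq_zero [EMetricSpace H] {Γ : Set H} {i : ℕ} (h : rN Γ i = 0) :
    Γ.encard ≤ i := by
  -- `i + 1` points at mutual distance `≥ δ` cannot lie in `i` open balls of radius `δ / 2`.
  by_contra! hlt
  obtain ⟨s, hsΓ, hs⟩ := exists_subset_encard_eq (Order.add_one_le_of_lt hlt)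
  have hsfin : s.Finite := finite_of_encard_eq_coe (k := i + 1) (by simpa using hs)
  set δ := hsfin.toFinset.offDiag.inf fun p => edist p.1 p.2
  have hδ : 0 < δ := (Finset.lt_inf_iff ENNReal.zero_lt_top).2 fun p hp =>
    edist_pos.2 (Finset.mem_offDiag.1 hp).2.2
  obtain ⟨ω, hω⟩ := exists_cover_eball_of_rN_lt (h ▸ ENNReal.half_pos hδ.ne')
  obtain ⟨x₀, hx₀⟩ : s.Nonempty := nonempty_of_encard_ne_zero (by simp [hs])
  obtain ⟨j₀, -⟩ := mem_iUnion.1 (hω (hsΓ hx₀))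
  have : Nonempty (Fin i) := ⟨j₀⟩
  choose! c hc using fun x (hx : x ∈ s) => mem_iUnion.1 (hω (hsΓ hx))
  obtain ⟨x, hx, y, hy, hxy, hcxy⟩ :=
    exists_ne_map_eq_of_encard_lt_of_maps_to (t := univ)
      (by simpa [hs] using ENat.natCast_lt_succ) (mapsTo_univ c s)
  have hδle : δ ≤ edist x y :=
    Finset.inf_le (f := fun p : H × H => edist p.1 p.2) (b := (x, y)) (by simp [hx, hy, hxy])
  have hxy_lt : edist x y < δ := calc
    edist x y ≤ edist x (ω (c x)) + edist y (ω (c x)) := edist_triangle_right _ _ _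
    _ < δ / 2 + δ / 2 := ENNReal.add_lt_add (hc x hx) (hcxy ▸ hc y hy)
    _ = δ := ENNReal.add_halves δ
  exact hxy_lt.not_ge hδle

lemma exists_cover_two_mul_rN [EMetricSpace H] [Nonempty H] (Γ : Set H) {i : ℕ} (hi : i ≠ 0) :
    ∃ ω : Fin i → H, Γ ⊆ ⋃ j, closedEBall (ω j) (2 * rN Γ i) := by
  have : NeZero i := ⟨hi⟩
  rcases eq_or_ne (rN Γ i) 0 with h0 | h0
  · have hcard := encard_le_of_rN_eq_zero h0
    obtain ⟨g, -, hg⟩ := (finite_of_encard_le_coe hcard).exists_injOn_of_encard_le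
      (t := (univ : Set (Fin i))) (by simpa using hcard)
    refine ⟨Function.invFunOn g Γ, fun x hx => mem_iUnion.2 ⟨g x, ?_⟩⟩
    rw [hg.leftInvOn_invFunOn hx]
    exact mem_closedEBall_self
  rcases eq_or_ne (rN Γ i) ⊤ with htop | htop
  · exact ⟨fun _ => Classical.arbitrary H, fun x _ => mem_iUnion.2 ⟨0, by simp [htop]⟩⟩
  obtain ⟨ω, hω⟩ := exists_cover_eball_of_rN_lt (two_mul (rN Γ i) ▸ ENNReal.lt_add_right htop h0)
  exact ⟨ω, hω.trans (iUnion_mono fun j => eball_subset_closedEBall)⟩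

end Covering

section Decomposition

variable {H : Type*} [MeasurableSpace H]

lemma exists_measure_univ_le_card_mul {ι : Type*} [Fintype ι] [Nonempty ι] (σ : Measure H)
    (B : ι → Set H) (h : ∀ᵐ x ∂σ, x ∈ ⋃ j, B j) :
    ∃ j, σ univ ≤ Fintype.card ι * σ (B j) := by
  obtain ⟨j, hj⟩ := Finite.exists_max fun j => σ (B j)
  refine ⟨j, ?_⟩
  calc σ univ ≤ σ (⋃ j, B j) := measure_mono_ae (h.mono fun x hx _ => hx)
    _ ≤ ∑ k, σ (B k) := measure_iUnion_fintype_le σ B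
    _ ≤ ∑ _k : ι, σ (B j) := Finset.sum_le_sum fun k _ => hj k
    _ = Fintype.card ι * σ (B j) := by simp

lemma exists_le_measure_univ_eq_of_le (σ : Measure H) {B : Set H} (hB : MeasurableSet B)
    (hσB : σ B ≠ ⊤) {m : ℝ≥0∞} (hm : m ≤ σ B) :
    ∃ ν ≤ σ, ν univ = m ∧ ν Bᶜ = 0 := by
  rcases eq_or_ne (σ B) 0 with h0 | h0
  · exact ⟨0, Measure.zero_le σ, (nonpos_iff_eq_zero.1 (h0 ▸ hm)).symm, rfl⟩
  refine ⟨(m / σ B) • σ.restrict B, Measure.le_iff'.2 fun s => ?_, ?_, ?_⟩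
  · calc (m / σ B) * σ.restrict B s ≤ 1 * σ.restrict B s :=
          mul_le_mul_left (ENNReal.div_le_of_le_mul (by rwa [one_mul])) _
      _ ≤ σ s := (one_mul _).trans_le (Measure.restrict_apply_le B s)
  · simp [ENNReal.div_mul_cancel h0 hσB]
  · simp [Measure.restrict_apply hB.compl]


lemma exists_decomposition_into_balls [EMetricSpace H] [OpensMeasurableSpace H] [Nonempty H]
    (Γ : Set H) {m : ℝ≥0∞} (hm : m ≠ ⊤) (k : ℕ) (σ : Measure H) (hσΓ : ∀ᵐ x ∂σ, x ∈ Γ)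
    (hσ : σ univ = k * m) :
    ∃ (ω : ℕ → H) (ν : ℕ → Measure H),
      (∀ i ∈ Finset.Icc 1 k, ν i univ = m ∧ ∀ᵐ x ∂ν i, edist x (ω i) ≤ 2 * rN Γ i) ∧
      σ = ∑ i ∈ Finset.Icc 1 k, ν i := by
  induction k generalizing σ with
  | zero =>
    refine ⟨fun _ => Classical.arbitrary H, fun _ => 0, by simp, ?_⟩
    simpa using Measure.measure_univ_eq_zero.1 (by simpa using hσ)
  | succ k ih =>
    have : IsFiniteMeasure σ := ⟨hσ ▸ ENNReal.mul_lt_top (by simp) hm.lt_top⟩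
    obtain ⟨c, hc⟩ := exists_cover_two_mul_rN Γ k.succ_ne_zero
    obtain ⟨j, hj⟩ := exists_measure_univ_le_card_mul σ _ (hσΓ.mono fun x hx => hc hx)
    have hmB : m ≤ σ (closedEBall (c j) (2 * rN Γ (k + 1))) := by
      rw [hσ, Fintype.card_fin] at hj
      exact (ENNReal.mul_le_mul_iff_right (Nat.cast_ne_zero.2 k.succ_ne_zero)
        (ENNReal.natCast_ne_top _)).1 hj
    obtain ⟨ν₀, hν₀σ, hν₀, hν₀B⟩ :=
      exists_le_measure_univ_eq_of_le σ isClosed_closedEBall.measurableSet (measure_ne_top _ _) hmB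
    have : IsFiniteMeasure ν₀ := isFiniteMeasure_of_le σ hν₀σ
    obtain ⟨ω, ν, hpieces, hsum⟩ := ih (σ - ν₀)
      ((Measure.absolutelyContinuous_of_le Measure.sub_le).ae_le hσΓ)
      (by rw [Measure.sub_apply MeasurableSet.univ hν₀σ, hσ, hν₀, Nat.cast_succ, add_one_mul,
        ENNReal.add_sub_cancel_right hm])
    refine ⟨Function.update ω (k + 1) (c j), Function.update ν (k + 1) ν₀, fun i hi => ?_, ?_⟩
    · rcases (Finset.mem_Icc.1 hi).2.eq_or_lt with rfl | hlt
      · simpa using ⟨hν₀, hν₀B⟩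
      · simpa [hlt.ne] using hpieces i (Finset.mem_Icc.2 ⟨(Finset.mem_Icc.1 hi).1, by omega⟩)
    · rw [Finset.sum_Icc_succ_top (by omega), Finset.sum_update_of_notMem (by simp),
        Function.update_self, ← hsum, Measure.sub_add_cancel_of_le hν₀σ]

end Decomposition

section Transport

variable {H : Type*} [MeasurableSpace H] [PseudoEMetricSpace H]

lemma W2sq_sum_le {ι : Type*} (s : Finset ι) (ν : ι → Measure H) (ω : ι → H) (R : ι → ℝ≥0∞)
    {m : ℝ≥0∞} (hmass : ∀ i ∈ s, ν i univ = m) (hball : ∀ i ∈ s, ∀ᵐ x ∂ν i, edist x (ω i) ≤ R i) :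
    W2sq (∑ i ∈ s, ν i) (m • ∑ i ∈ s, Measure.dirac (ω i)) ≤ m * ∑ i ∈ s, R i ^ 2 := by
  have hpair (i : ι) : Measurable fun x : H => (x, ω i) := measurable_id.prodMk measurable_const
  refine iInf₂_le_of_le (∑ i ∈ s, (ν i).map fun x => (x, ω i)) ⟨?_, ?_⟩ ?_
  · rw [Measure.map_finset_sum measurable_fst.aemeasurable]
    refine Finset.sum_congr rfl fun i _ => ?_
    rw [Measure.map_map measurable_fst (hpair i)]
    exact Measure.map_id
  · rw [Measure.map_finset_sum measurable_snd.aemeasurable, Finset.smul_sum]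
    refine Finset.sum_congr rfl fun i hi => ?_
    rw [Measure.map_map measurable_snd (hpair i)]
    simp [Function.comp_def, hmass i hi]
  · rw [lintegral_finsetSum_measure, Finset.mul_sum]
    gcongr with i hi
    calc ∫⁻ p, edist p.1 p.2 ^ 2 ∂(ν i).map (fun x => (x, ω i))
        ≤ ∫⁻ x, edist x (ω i) ^ 2 ∂ν i := lintegral_map_le _ _
      _ ≤ ∫⁻ _, R i ^ 2 ∂ν i := lintegral_mono_ae ((hball i hi).mono fun x hx => by gcongr)
      _ = m * R i ^ 2 := by rw [lintegral_const, hmass i hi, mul_comm]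

lemma hN_sq_le_W2sq (μ : Measure H) (N : ℕ) (ω : ℕ → H) :
    hN μ N ^ 2 ≤ W2sq μ ((N : ℝ≥0∞)⁻¹ • ∑ i ∈ Finset.Icc 1 N, Measure.dirac (ω i)) := by
  have hreindex : ∑ i ∈ Finset.Icc 1 N, Measure.dirac (ω i) =
      ∑ j : Fin N, Measure.dirac (ω (j + 1)) := by
    rw [Fin.sum_univ_eq_sum_range (fun j => Measure.dirac (ω (j + 1))), Finset.range_eq_Ico,
      Finset.sum_Ico_add' (fun i => Measure.dirac (ω i))]
    rfl
  calc hN μ N ^ 2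
      ≤ (W2sq μ ((N : ℝ≥0∞)⁻¹ • ∑ i ∈ Finset.Icc 1 N, Measure.dirac (ω i)) ^ (1 / 2 : ℝ)) ^ 2 := by
        gcongr
        exact iInf_le_of_le (fun j => ω (j + 1)) (by rw [hreindex])
    _ = _ := by rw [← ENNReal.rpow_natCast, ← ENNReal.rpow_mul]; norm_num

end Transport

/-- For a probability measure `μ` supported on `Γ ⊆ H`:
`h_N(μ)² ≤ (4/N)·Σ_{1≤i≤N} r_i(Γ)²`; moreover there are points `ω_i` and measures `ν_i` of
mass `1/N`, with `ν_i` supported in the closed ball `B(ω_i, 2 r_i(Γ))`, such that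
`μ = Σ_i ν_i` and `W₂(μ, (1/N)Σ δ_{ω_i})² ≤ (1/N)Σ_i (2 r_i(Γ))²`. -/
theorem stmt_8 {H : Type*} [MetricSpace H] [MeasurableSpace H] [BorelSpace H] [Nonempty H]
    (Γ : Set H) (μ : Measure H) (hμ : IsProbabilityMeasure μ) (hsupp : ∀ᵐ x ∂μ, x ∈ Γ)
    (N : ℕ) (hN1 : 1 ≤ N) :
    hN μ N ^ 2 ≤ (4 / N) * ∑ i ∈ Finset.Icc 1 N, rN Γ i ^ 2 ∧
    ∃ (ω : ℕ → H) (ν : ℕ → Measure H),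
      (∀ i ∈ Finset.Icc 1 N, ν i Set.univ = 1 / N) ∧
      (∀ i ∈ Finset.Icc 1 N, ν i {x : H | edist x (ω i) ≤ 2 * rN Γ i}ᶜ = 0) ∧
      μ = ∑ i ∈ Finset.Icc 1 N, ν i ∧
      W2sq μ ((N : ℝ≥0∞)⁻¹ • ∑ i ∈ Finset.Icc 1 N, Measure.dirac (ω i)) ≤
        (N : ℝ≥0∞)⁻¹ * ∑ i ∈ Finset.Icc 1 N, (2 * rN Γ i) ^ 2 := by
  have hN0 : (N : ℝ≥0∞) ≠ 0 := Nat.cast_ne_zero.2 (by omega)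
  obtain ⟨ω, ν, hpieces, hμν⟩ := exists_decomposition_into_balls Γ (m := 1 / N)
    (ENNReal.div_ne_top ENNReal.one_ne_top hN0) N μ hsupp
    (by rw [hμ.measure_univ, mul_one_div, ENNReal.div_self hN0 (ENNReal.natCast_ne_top N)])
  have hW : W2sq μ ((N : ℝ≥0∞)⁻¹ • ∑ i ∈ Finset.Icc 1 N, Measure.dirac (ω i)) ≤
      (N : ℝ≥0∞)⁻¹ * ∑ i ∈ Finset.Icc 1 N, (2 * rN Γ i) ^ 2 := by
    rw [← one_div, hμν]
    exact W2sq_sum_le _ ν ω _ (fun i hi => (hpieces i hi).1) (fun i hi => (hpieces i hi).2)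
  refine ⟨?_, ω, ν, fun i hi => (hpieces i hi).1, fun i hi => (hpieces i hi).2, hμν, hW⟩
  calc hN μ N ^ 2 ≤ _ := hN_sq_le_W2sq μ N ω
    _ ≤ _ := hW
    _ = 4 / N * ∑ i ∈ Finset.Icc 1 N, rN Γ i ^ 2 := by
      simp_rw [mul_pow, ← Finset.mul_sum]
      rw [ENNReal.div_eq_inv_mul]
      ring
end
end

section
/- Let X ⊂ ℝ^d be a compact domain, Leb the Lebesgue measure restricted to X normalized to mass 1, and (P_1, …, P_N) a measurable partition of X with Leb(P_j) = 1/N for each j; let b_j := N·∫_{P_j} x dx be the barycenter of P_j, and set ν_N := (1/N)Σ_j δ_{b_j}. Let y_1, …, y_N ∈ ℝ^d and η_N := (1/N)Σ_j δ_{y_j}. Then there exists a permutation σ of {1, …, N} such that Σ_{1≤j≤N} ∫_{P_{σ(j)}} |y_j − x|² dx ≤ Σ_{1≤j≤N} ∫_{P_j} |b_j − x|² dx + W₂²(ν_N, η_N). In particular, if each P_j has diameter at most C_P·N^{−1/d}, the left-hand side is at most C_P²·N^{−2/d} + W₂²(ν_N, η_N). -/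
open MeasureTheory
open scoped ENNReal NNReal

noncomputable section

/-!
Fix a permutation `σ`. Expanding `‖y_j - x‖²` around the barycenter `b_{σ j}` of `P_{σ j}`, the
cross term integrates to zero, so the left-hand side equals
`∑_j ∫_{P_j} ‖b_j - x‖² + N⁻¹ ∑_j ‖y_j - b_{σ j}‖²`. It remains to choose `σ` with
`N⁻¹ ∑_j ‖y_j - b_{σ j}‖² ≤ W₂²(ν_N, η_N)`. A coupling of the two uniform `N`-point measures,
with the mass at repeated points split equally among their indices, is a doubly stochastic
matrix; by Birkhoff–von Neumann it is a convex combination of permutation matrices, and one of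
these permutations costs no more than the coupling. For the diameter bound, the barycenter of
`P_j` lies in the closed convex hull of `P_j`, which has the same diameter.
-/

open Finset

theorem exists_perm_sum_le_of_mem_doublyStochastic {n : Type*} [Fintype n] [DecidableEq n]
    {M : Matrix n n ℝ} (hM : M ∈ doublyStochastic ℝ n) (c : n → n → ℝ) :
    ∃ σ : Equiv.Perm n, ∑ i, c i (σ i) ≤ ∑ i, ∑ j, M i j * c i j := by
  let cost : Matrix n n ℝ →ₗ[ℝ] ℝ :=
    { toFun := fun A => ∑ i, ∑ j, A i j * c i j
      map_add' := fun A B => by simp only [Matrix.add_apply, add_mul, sum_add_distrib]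
      map_smul' := fun r A => by
        simp only [Matrix.smul_apply, smul_eq_mul, mul_assoc, mul_sum, RingHom.id_apply] }
  rw [← SetLike.mem_coe, doublyStochastic_eq_convexHull_permMatrix] at hM
  obtain ⟨_, ⟨σ, rfl⟩, hσ⟩ :=
    (cost.concaveOn convex_univ).exists_le_of_mem_convexHull (Set.subset_univ _) hM
  refine ⟨σ, le_of_eq_of_le ?_ hσ⟩
  simp [cost, Equiv.Perm.permMatrix, PEquiv.toMatrix_apply]

theorem sum_div_card_fiber {ι β : Type*} [Fintype ι] [DecidableEq β] (y : ι → β) (F : β → ℝ) :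
    ∑ j, F (y j) / #{j' | y j' = y j} = ∑ v ∈ univ.image y, F v := by
  rw [sum_comp (fun v => F v / #{j' | y j' = v}) y]
  refine sum_congr rfl fun v hv => ?_
  obtain ⟨j, -, rfl⟩ := mem_image.1 hv
  have hj : (#{j' | y j' = y j} : ℝ) ≠ 0 := Nat.cast_ne_zero.2 (card_ne_zero.2 ⟨j, by simp⟩)
  rw [nsmul_eq_mul, mul_div_cancel₀ _ hj]

section Coupling

variable {α β : Type*} [MeasurableSpace α] [MeasurableSpace β]

theorem sum_measureReal_singleton_mk_eq_map_fst [MeasurableSingletonClass α]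
    [MeasurableSingletonClass β] {π : Measure (α × β)} [IsFiniteMeasure π] {T : Finset β}
    (hT : π.map Prod.snd (↑T)ᶜ = 0)
    (u : α) : ∑ v ∈ T, π.real {(u, v)} = (π.map Prod.fst).real {u} := by
  have hT' : π (Prod.snd ⁻¹' (↑T)ᶜ) = 0 := by
    rwa [Measure.map_apply measurable_snd T.measurableSet.compl] at hT
  rw [map_measureReal_apply measurable_fst (measurableSet_singleton u), measureReal_def,
    ← measure_inter_conull (t := Prod.snd ⁻¹' ↑T) hT', ← Set.prod_eq, ← coe_singleton,
    ← coe_product, ← measureReal_def, ← sum_measureReal_singleton, singleton_product, sum_map]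
  rfl

theorem sum_measureReal_singleton_mk_eq_map_snd [MeasurableSingletonClass α]
    [MeasurableSingletonClass β] {π : Measure (α × β)} [IsFiniteMeasure π] {S : Finset α}
    (hS : π.map Prod.fst (↑S)ᶜ = 0)
    (v : β) : ∑ u ∈ S, π.real {(u, v)} = (π.map Prod.snd).real {v} := by
  have hsnd : (π.map Prod.swap).map Prod.snd = π.map Prod.fst := by
    rw [Measure.map_map measurable_snd measurable_swap]; rfl
  have hfst : (π.map Prod.swap).map Prod.fst = π.map Prod.snd := by
    rw [Measure.map_map measurable_fst measurable_swap]; rfl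
  rw [← hfst, ← sum_measureReal_singleton_mk_eq_map_fst (hsnd ▸ hS) v]
  refine sum_congr rfl fun u _ => ?_
  rw [map_measureReal_apply measurable_swap (measurableSet_singleton _)]
  simp [← Set.singleton_prod_singleton]

variable {N : ℕ}

def empiricalMeasure (b : Fin N → α) : Measure α :=
  (N : ℝ≥0∞)⁻¹ • ∑ j, Measure.dirac (b j)

open Classical in
theorem empiricalMeasure_apply (b : Fin N → α) {s : Set α} (hs : MeasurableSet s) :
    empiricalMeasure b s = (N : ℝ≥0∞)⁻¹ * #{j | b j ∈ s} := by
  simp [empiricalMeasure, Measure.dirac_apply' _ hs, Set.indicator_apply, sum_boole]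

instance (b : Fin N → α) : IsFiniteMeasure (empiricalMeasure b) :=
  ⟨by simp [empiricalMeasure_apply b MeasurableSet.univ, ENNReal.inv_mul_le_one N |>.trans_lt]⟩

theorem empiricalMeasure_compl_image [MeasurableSingletonClass α] [DecidableEq α]
    (b : Fin N → α) : empiricalMeasure b (↑(univ.image b))ᶜ = 0 := by
  classical
  rw [empiricalMeasure_apply b (univ.image b).measurableSet.compl]
  simp

theorem empiricalMeasure_real_singleton [MeasurableSingletonClass α] [DecidableEq α]
    (b : Fin N → α) (u : α) :
    (empiricalMeasure b).real {u} = (N : ℝ)⁻¹ * #{j | b j = u} := by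
  classical
  simp [measureReal_def, empiricalMeasure_apply b (measurableSet_singleton u)]

theorem map_empiricalMeasure [MeasurableSingletonClass α] [MeasurableSingletonClass β]
    {f : α → β} (hf : Measurable f) (b : Fin N → α) :
    (empiricalMeasure b).map f = empiricalMeasure (f ∘ b) := by
  simp [empiricalMeasure, Measure.map_smul, Measure.map_finset_sum' hf.aemeasurable,
    Measure.map_dirac]

-- A point repeated among the `b i` (or `y j`) shares the mass of `π` equally among its indices.
def couplingMatrix [DecidableEq α] [DecidableEq β] (π : Measure (α × β)) (b : Fin N → α)
    (y : Fin N → β) : Matrix (Fin N) (Fin N) ℝ := fun i j =>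
  N * π.real {(b i, y j)} / #{i' | b i' = b i} / #{j' | y j' = y j}

theorem couplingMatrix_mem_doublyStochastic [MeasurableSingletonClass α]
    [MeasurableSingletonClass β] [DecidableEq α] [DecidableEq β] {π : Measure (α × β)}
    {b : Fin N → α} {y : Fin N → β} (h₁ : π.map Prod.fst = empiricalMeasure b)
    (h₂ : π.map Prod.snd = empiricalMeasure y) :
    couplingMatrix π b y ∈ doublyStochastic ℝ (Fin N) := by
  have : IsFiniteMeasure π := (Measure.isFiniteMeasure_map_iff measurable_fst.aemeasurable).1
    (h₁ ▸ inferInstance)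
  rw [mem_doublyStochastic_iff_sum]
  refine ⟨fun i j => by unfold couplingMatrix; positivity, fun i => ?_, fun j => ?_⟩
  · calc ∑ j, couplingMatrix π b y i j
        = N / #{i' | b i' = b i} * ∑ j, π.real {(b i, y j)} / #{j' | y j' = y j} := by
          simp only [couplingMatrix, mul_sum]
          exact sum_congr rfl fun j _ => by ring
      _ = 1 := by
          rw [sum_div_card_fiber y fun v => π.real {(b i, v)},
            sum_measureReal_singleton_mk_eq_map_fst (h₂ ▸ empiricalMeasure_compl_image y), h₁,
            empiricalMeasure_real_singleton]
          field_simp [Nat.cast_ne_zero.2 i.pos.ne']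
  · calc ∑ i, couplingMatrix π b y i j
        = N / #{j' | y j' = y j} * ∑ i, π.real {(b i, y j)} / #{i' | b i' = b i} := by
          simp only [couplingMatrix, mul_sum]
          exact sum_congr rfl fun i _ => by ring
      _ = 1 := by
          rw [sum_div_card_fiber b fun u => π.real {(u, y j)},
            sum_measureReal_singleton_mk_eq_map_snd (h₁ ▸ empiricalMeasure_compl_image b), h₂,
            empiricalMeasure_real_singleton]
          field_simp [Nat.cast_ne_zero.2 j.pos.ne']

theorem sum_couplingMatrix_mul [DecidableEq α] [DecidableEq β] (π : Measure (α × β))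
    (b : Fin N → α) (y : Fin N → β) (c : α → β → ℝ) :
    ∑ i, ∑ j, couplingMatrix π b y i j * c (b i) (y j) =
      N * ∑ u ∈ univ.image b, ∑ v ∈ univ.image y, π.real {(u, v)} * c u v := by
  calc ∑ i, ∑ j, couplingMatrix π b y i j * c (b i) (y j)
      = N * ∑ i, (∑ j, π.real {(b i, y j)} * c (b i) (y j) / #{j' | y j' = y j}) /
          #{i' | b i' = b i} := by
        simp only [couplingMatrix, mul_sum, sum_div]
        exact sum_congr rfl fun i _ => sum_congr rfl fun j _ => by ring
    _ = N * ∑ u ∈ univ.image b, ∑ v ∈ univ.image y, π.real {(u, v)} * c u v := by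
        rw [← sum_div_card_fiber b fun u => ∑ v ∈ univ.image y, π.real {(u, v)} * c u v]
        refine congrArg _ (sum_congr rfl fun i _ => ?_)
        rw [sum_div_card_fiber y fun v => π.real {(b i, v)} * c (b i) v]

theorem ofReal_sum_measureReal_mul_le_lintegral [MeasurableSingletonClass α]
    [MeasurableSingletonClass β] (π : Measure (α × β)) [IsFiniteMeasure π] (S : Finset α)
    (T : Finset β) {c : α → β → ℝ} (hc : ∀ u v, 0 ≤ c u v) :
    ENNReal.ofReal (∑ u ∈ S, ∑ v ∈ T, π.real {(u, v)} * c u v) ≤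
      ∫⁻ p, ENNReal.ofReal (c p.1 p.2) ∂π := by
  rw [← sum_product' (f := fun u v => π.real {(u, v)} * c u v),
    ENNReal.ofReal_sum_of_nonneg fun p _ => mul_nonneg measureReal_nonneg (hc _ _)]
  calc ∑ p ∈ S ×ˢ T, ENNReal.ofReal (π.real {(p.1, p.2)} * c p.1 p.2)
      = ∑ p ∈ S ×ˢ T, ENNReal.ofReal (c p.1 p.2) * π {p} :=
        sum_congr rfl fun p _ => by
          rw [ENNReal.ofReal_mul measureReal_nonneg, ofReal_measureReal, mul_comm]
    _ = ∫⁻ p in ↑(S ×ˢ T), ENNReal.ofReal (c p.1 p.2) ∂π := (lintegral_finset _ _).symm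
    _ ≤ ∫⁻ p, ENNReal.ofReal (c p.1 p.2) ∂π := setLIntegral_le_lintegral _ _

theorem exists_perm_sum_le_lintegral_of_map_eq [MeasurableSingletonClass α]
    [MeasurableSingletonClass β] (b : Fin N → α) (y : Fin N → β) {c : α → β → ℝ}
    (hc : ∀ u v, 0 ≤ c u v) {π : Measure (α × β)} (h₁ : π.map Prod.fst = empiricalMeasure b)
    (h₂ : π.map Prod.snd = empiricalMeasure y) :
    ∃ σ : Equiv.Perm (Fin N), ENNReal.ofReal ((N : ℝ)⁻¹ * ∑ j, c (b (σ j)) (y j)) ≤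
      ∫⁻ p, ENNReal.ofReal (c p.1 p.2) ∂π := by
  classical
  have : IsFiniteMeasure π := (Measure.isFiniteMeasure_map_iff measurable_fst.aemeasurable).1
    (h₁ ▸ inferInstance)
  obtain ⟨τ, hτ⟩ := exists_perm_sum_le_of_mem_doublyStochastic
    (couplingMatrix_mem_doublyStochastic h₁ h₂) fun i j => c (b i) (y j)
  rw [sum_couplingMatrix_mul] at hτ
  refine ⟨τ.symm, le_trans (ENNReal.ofReal_le_ofReal ?_)
    (ofReal_sum_measureReal_mul_le_lintegral π (univ.image b) (univ.image y) hc)⟩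
  rw [← Equiv.sum_comp τ]
  simp only [Equiv.symm_apply_apply]
  rcases N.eq_zero_or_pos with rfl | hN
  · simp
  · rwa [inv_mul_le_iff₀ (by positivity)]

end Coupling

section Wasserstein

variable {α : Type*} [PseudoMetricSpace α] [MeasurableSpace α] [MeasurableSingletonClass α]
  {N : ℕ}

theorem W2sq_empiricalMeasure_le (b y : Fin N → α) :
    W2sq (empiricalMeasure b) (empiricalMeasure y) ≤
      (N : ℝ≥0∞)⁻¹ * ∑ j, edist (b j) (y j) ^ 2 := by
  let π₀ := empiricalMeasure fun j => (b j, y j)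
  refine iInf₂_le_of_le π₀
    ⟨map_empiricalMeasure measurable_fst _, map_empiricalMeasure measurable_snd _⟩ ?_
  simp [π₀, empiricalMeasure, lintegral_smul_measure]

theorem exists_perm_sum_dist_sq_le_W2sq [NeZero N] (b y : Fin N → α) :
    ∃ σ : Equiv.Perm (Fin N), (N : ℝ)⁻¹ * ∑ j, dist (b (σ j)) (y j) ^ 2 ≤
      (W2sq (empiricalMeasure b) (empiricalMeasure y)).toReal := by
  obtain ⟨σ, -, hσ⟩ := exists_min_image univ
    (fun σ : Equiv.Perm (Fin N) => ∑ j, dist (b (σ j)) (y j) ^ 2) univ_nonempty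
  have hfin : W2sq (empiricalMeasure b) (empiricalMeasure y) ≠ ⊤ :=
    ne_top_of_le_ne_top (ENNReal.mul_ne_top (by simp [NeZero.ne N])
      (ENNReal.sum_ne_top.2 fun j _ => ENNReal.pow_ne_top (edist_ne_top _ _)))
      (W2sq_empiricalMeasure_le b y)
  refine ⟨σ, (ENNReal.ofReal_le_iff_le_toReal hfin).1 (le_iInf₂ fun π hπ => ?_)⟩
  obtain ⟨τ, hτ⟩ := exists_perm_sum_le_lintegral_of_map_eq b y
    (c := fun u v => dist u v ^ 2) (fun _ _ => by positivity) hπ.1 hπ.2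
  refine (ENNReal.ofReal_le_ofReal ?_).trans (hτ.trans_eq ?_)
  · exact mul_le_mul_of_nonneg_left (hσ τ (mem_univ τ)) (by positivity)
  · simp only [edist_dist, ENNReal.ofReal_pow dist_nonneg]

end Wasserstein

section Barycenter

variable {α E : Type*} [MeasurableSpace α] [NormedAddCommGroup E] {μ : Measure α}
  [IsFiniteMeasure μ] {f : α → E}

theorem integral_norm_sub_sq_eq_add [InnerProductSpace ℝ E] [CompleteSpace E] (hf : MemLp f 2 μ)
    (v : E) :
    ∫ x, ‖v - f x‖ ^ 2 ∂μ =
      ∫ x, ‖(⨍ a, f a ∂μ) - f x‖ ^ 2 ∂μ + μ.real Set.univ * ‖v - ⨍ a, f a ∂μ‖ ^ 2 := by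
  set m := ⨍ a, f a ∂μ
  have hpt (x : α) :
      ‖v - f x‖ ^ 2 = ‖m - f x‖ ^ 2 + (2 * inner ℝ (v - m) (m - f x) + ‖v - m‖ ^ 2) := by
    rw [← sub_add_sub_cancel v m (f x), norm_add_sq_real]; ring
  have hdev : Integrable (fun x => m - f x) μ := (integrable_const m).sub (hf.integrable one_le_two)
  have hinner : ∫ x, inner ℝ (v - m) (m - f x) ∂μ = 0 := by
    rw [integral_inner hdev, integral_sub (integrable_const m) (hf.integrable one_le_two),
      integral_const, measure_smul_average, sub_self, inner_zero_right]
  have hsq : Integrable (fun x => ‖m - f x‖ ^ 2) μ :=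
    ((memLp_const m).sub hf).integrable_norm_pow two_ne_zero
  have hlin : Integrable (fun x => 2 * inner ℝ (v - m) (m - f x)) μ :=
    (hdev.const_inner (v - m)).const_mul 2
  have hrest : Integrable (fun x => 2 * inner ℝ (v - m) (m - f x) + ‖v - m‖ ^ 2) μ :=
    hlin.add (integrable_const _)
  simp_rw [hpt]
  rw [integral_add hsq hrest, integral_add hlin (integrable_const _), integral_const_mul, hinner,
    integral_const, smul_eq_mul]
  ring

theorem norm_average_sub_le_diam [NormedSpace ℝ E] [CompleteSpace E] [NeZero μ] {s : Set E}
    (hs : Bornology.IsBounded s) (hfs : ∀ᵐ a ∂μ, f a ∈ s) (hf : Integrable f μ) {x : E}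
    (hx : x ∈ s) : ‖(⨍ a, f a ∂μ) - x‖ ≤ Metric.diam s := by
  have hmem : ⨍ a, f a ∂μ ∈ closure (convexHull ℝ s) :=
    (convex_convexHull ℝ s).closure.average_mem isClosed_closure
      (hfs.mono fun a ha => subset_closure (subset_convexHull ℝ s ha)) hf
  rw [← dist_eq_norm, ← convexHull_diam, ← Metric.diam_closure]
  exact Metric.dist_le_diam_of_mem (isBounded_convexHull.2 hs).closure hmem
    (subset_closure (subset_convexHull ℝ s hx))

theorem integral_norm_average_sub_sq_le [NormedSpace ℝ E] [CompleteSpace E] [NeZero μ]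
    {s : Set E} (hs : Bornology.IsBounded s) (hfs : ∀ᵐ a ∂μ, f a ∈ s) (hf : Integrable f μ) :
    ∫ x, ‖(⨍ a, f a ∂μ) - f x‖ ^ 2 ∂μ ≤ Metric.diam s ^ 2 * μ.real Set.univ := by
  refine (Real.le_norm_self _).trans (norm_integral_le_of_norm_le_const ?_)
  filter_upwards [hfs] with x hx
  rw [Real.norm_of_nonneg (by positivity)]
  exact pow_le_pow_left₀ (norm_nonneg _) (norm_average_sub_le_diam hs hfs hf hx) 2

end Barycenter

section SetAverage

variable {E : Type*} [NormedAddCommGroup E] [MeasurableSpace E] [OpensMeasurableSpace E]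
  [SecondCountableTopology E] {μ : Measure E} [IsFiniteMeasure μ] {s : Set E}

theorem memLp_restrict_of_isBounded (hs : MeasurableSet s) (hbdd : Bornology.IsBounded s)
    (p : ℝ≥0∞) : MemLp (fun x => x) p (μ.restrict s) := by
  obtain ⟨C, hC⟩ := hbdd.exists_norm_le
  exact .of_bound aestronglyMeasurable_id C ((ae_restrict_mem hs).mono hC)

theorem setIntegral_norm_sub_sq_eq_add [InnerProductSpace ℝ E] [CompleteSpace E]
    (hs : MeasurableSet s) (hbdd : Bornology.IsBounded s) (v : E) :
    ∫ x in s, ‖v - x‖ ^ 2 ∂μ =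
      ∫ x in s, ‖(⨍ x in s, x ∂μ) - x‖ ^ 2 ∂μ + μ.real s * ‖v - ⨍ x in s, x ∂μ‖ ^ 2 := by
  rw [integral_norm_sub_sq_eq_add (memLp_restrict_of_isBounded hs hbdd 2) v,
    measureReal_restrict_apply_univ]

theorem setIntegral_norm_setAverage_sub_sq_le [NormedSpace ℝ E] [CompleteSpace E]
    (hs : MeasurableSet s) (hbdd : Bornology.IsBounded s) :
    ∫ x in s, ‖(⨍ x in s, x ∂μ) - x‖ ^ 2 ∂μ ≤ Metric.diam s ^ 2 * μ.real s := by
  rcases eq_or_ne (μ s) 0 with h | h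
  · simp [Measure.restrict_eq_zero.2 h, measureReal_def, h]
  · have : NeZero (μ.restrict s) := ⟨by simpa using h⟩
    simpa using integral_norm_average_sub_sq_le hbdd (ae_restrict_mem hs)
      ((memLp_restrict_of_isBounded hs hbdd 1).integrable le_rfl)

variable {ι : Type*} [Fintype ι] {P : ι → Set E} {m : ℝ}

theorem sum_setIntegral_norm_sub_sq_comp_perm [InnerProductSpace ℝ E] [CompleteSpace E]
    (hP : ∀ j, MeasurableSet (P j)) (hbdd : ∀ j, Bornology.IsBounded (P j))
    (hm : ∀ j, μ.real (P j) = m) (σ : Equiv.Perm ι) (y : ι → E) :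
    ∑ j, ∫ x in P (σ j), ‖y j - x‖ ^ 2 ∂μ =
      ∑ j, ∫ x in P j, ‖(⨍ x in P j, x ∂μ) - x‖ ^ 2 ∂μ +
        m * ∑ j, dist (⨍ x in P (σ j), x ∂μ) (y j) ^ 2 := by
  rw [sum_congr rfl fun j _ => setIntegral_norm_sub_sq_eq_add (hP (σ j)) (hbdd (σ j)) (y j),
    sum_add_distrib, Equiv.sum_comp σ fun j => ∫ x in P j, ‖(⨍ x in P j, x ∂μ) - x‖ ^ 2 ∂μ]
  simp only [hm, mul_sum, dist_comm _ (y _), dist_eq_norm]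

theorem sum_setIntegral_norm_setAverage_sub_sq_le [NormedSpace ℝ E] [CompleteSpace E]
    (hP : ∀ j, MeasurableSet (P j)) (hbdd : ∀ j, Bornology.IsBounded (P j))
    (hm : ∀ j, μ.real (P j) = m) {D : ℝ} (hD : ∀ j, Metric.diam (P j) ≤ D) :
    ∑ j, ∫ x in P j, ‖(⨍ x in P j, x ∂μ) - x‖ ^ 2 ∂μ ≤ Fintype.card ι * (D ^ 2 * m) := by
  refine (sum_le_sum (g := fun _ => D ^ 2 * m) fun j _ => ?_).trans_eq (by simp)
  rw [← hm j]
  refine (setIntegral_norm_setAverage_sub_sq_le (hP j) (hbdd j)).trans ?_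
  gcongr
  exact hD j

end SetAverage

theorem stmt_14_general {d N : ℕ} (hN : 1 ≤ N)
    (X : Set (Euc d)) (hX : IsCompact X)
    (Leb : Measure (Euc d)) (hprob : IsProbabilityMeasure Leb)
    (P : Fin N → Set (Euc d)) (hPmeas : ∀ j, MeasurableSet (P j))
    (hPmass : ∀ j, Leb (P j) = 1 / N)
    (hPcover : (⋃ j, P j) = X)
    (b : Fin N → Euc d) (hb : ∀ j, b j = (N : ℝ) • ∫ x in P j, x ∂Leb)
    (y : Fin N → Euc d) :
    ∃ σ : Equiv.Perm (Fin N),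
      (∑ j, ∫ x in P (σ j), ‖y j - x‖ ^ 2 ∂Leb) ≤
          (∑ j, ∫ x in P j, ‖b j - x‖ ^ 2 ∂Leb) +
            (W2sq ((N : ℝ≥0∞)⁻¹ • ∑ j, Measure.dirac (b j))
              ((N : ℝ≥0∞)⁻¹ • ∑ j, Measure.dirac (y j))).toReal ∧
      ∀ CP : ℝ, (∀ j, Metric.diam (P j) ≤ CP * (N : ℝ) ^ (-(1 : ℝ) / d)) →
        (∑ j, ∫ x in P (σ j), ‖y j - x‖ ^ 2 ∂Leb) ≤
          CP ^ 2 * (N : ℝ) ^ (-(2 : ℝ) / d) +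
            (W2sq ((N : ℝ≥0∞)⁻¹ • ∑ j, Measure.dirac (b j))
              ((N : ℝ≥0∞)⁻¹ • ∑ j, Measure.dirac (y j))).toReal := by
  have hmass (k : Fin N) : Leb.real (P k) = (N : ℝ)⁻¹ := by simp [measureReal_def, hPmass]
  have hbdd (k : Fin N) : Bornology.IsBounded (P k) :=
    hX.isBounded.subset (hPcover ▸ Set.subset_iUnion P k)
  obtain rfl : b = fun k => ⨍ x in P k, x ∂Leb := funext fun k => by
    rw [hb k, average_eq, measureReal_restrict_apply_univ, hmass, inv_inv]
  have : NeZero N := ⟨by omega⟩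
  obtain ⟨σ, hσ⟩ := exists_perm_sum_dist_sq_le_W2sq (fun k => ⨍ x in P k, x ∂Leb) y
  have hsplit := sum_setIntegral_norm_sub_sq_comp_perm hPmeas hbdd hmass σ y
  refine ⟨σ, by rw [hsplit]; exact add_le_add_right hσ _, fun CP hCP => ?_⟩
  have hpow : ((N : ℝ) ^ (-(1 : ℝ) / d)) ^ 2 = (N : ℝ) ^ (-(2 : ℝ) / d) := by
    rw [← Real.rpow_natCast, ← Real.rpow_mul (Nat.cast_nonneg N)]
    ring_nf
  refine hsplit ▸ add_le_add ?_ hσ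
  refine (sum_setIntegral_norm_setAverage_sub_sq_le hPmeas hbdd hmass hCP).trans_eq ?_
  rw [Fintype.card_fin, mul_pow, hpow]
  field_simp

/-- Given an equal-mass measurable partition `(P_j)` of a compact domain `X`
with barycenters `b_j`, and points `y_1, …, y_N`, there is a permutation `σ` such that
`Σ_j ∫_{P_{σ(j)}} |y_j − x|² ≤ Σ_j ∫_{P_j} |b_j − x|² + W₂²(ν_N, η_N)`, where
`ν_N = (1/N)Σδ_{b_j}` and `η_N = (1/N)Σδ_{y_j}`; and if each `P_j` has diameter at most
`C_P N^{−1/d}`, the left-hand side is at most `C_P² N^{−2/d} + W₂²(ν_N, η_N)`. -/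
theorem stmt_14 {d N : ℕ} (hd : 1 ≤ d) (hN : 1 ≤ N)
    (X : Set (Euc d)) (hX : IsCompact X)
    (Leb : Measure (Euc d)) (hprob : IsProbabilityMeasure Leb)
    (hLeb : Leb = (volume X)⁻¹ • volume.restrict X)
    (P : Fin N → Set (Euc d)) (hPmeas : ∀ j, MeasurableSet (P j))
    (hPmass : ∀ j, Leb (P j) = 1 / N)
    (hPdisj : Pairwise (Function.onFun Disjoint P)) (hPcover : (⋃ j, P j) = X)
    (b : Fin N → Euc d) (hb : ∀ j, b j = (N : ℝ) • ∫ x in P j, x ∂Leb)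
    (y : Fin N → Euc d) :
    ∃ σ : Equiv.Perm (Fin N),
      (∑ j, ∫ x in P (σ j), ‖y j - x‖ ^ 2 ∂Leb) ≤
          (∑ j, ∫ x in P j, ‖b j - x‖ ^ 2 ∂Leb) +
            (W2sq ((N : ℝ≥0∞)⁻¹ • ∑ j, Measure.dirac (b j))
              ((N : ℝ≥0∞)⁻¹ • ∑ j, Measure.dirac (y j))).toReal ∧
      ∀ CP : ℝ, (∀ j, Metric.diam (P j) ≤ CP * (N : ℝ) ^ (-(1 : ℝ) / d)) →
        (∑ j, ∫ x in P (σ j), ‖y j - x‖ ^ 2 ∂Leb) ≤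
          CP ^ 2 * (N : ℝ) ^ (-(2 : ℝ) / d) +
            (W2sq ((N : ℝ≥0∞)⁻¹ • ∑ j, Measure.dirac (b j))
              ((N : ℝ≥0∞)⁻¹ • ∑ j, Measure.dirac (y j))).toReal :=
  stmt_14_general hN X hX Leb hprob P hPmeas hPmass hPcover b hb y

end
end

section
/- Let X ⊂ ℝ^d be a compact domain with positive Lebesgue measure and let Leb be the Lebesgue measure restricted to X, normalized to total mass 1. Then there exists c > 0, depending only on X and d, such that for every N ≥ 1 and every probability measure ν on ℝ^d supported on at most N points, W₂(Leb, ν) ≥ c·N^{−1/d}. -/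
open MeasureTheory
open scoped ENNReal NNReal

noncomputable section

/-!
If `ν` is carried by a set `F` of at most `N` points, the `r`-neighbourhood of `F` is covered by
`N` balls of radius `r`, of total volume at most `N ω_d r^d`. For `r = a N^{-1/d}` with `a` small
(depending on `vol X` and `d` only) this is at most half the volume of `X`, so every coupling of
`Leb` with `ν` moves half of the mass a distance at least `r`, and `W₂² ≥ r² / 2`.
-/

open Metric ProbabilityTheory Filter Topology

section Wasserstein

variable {α : Type*} [MeasurableSpace α] [PseudoEMetricSpace α] [OpensMeasurableSpace α]

theorem lintegral_infEDist_sq_le_W2sq {η ν : Measure α} {s : Set α} (hs : MeasurableSet s)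
    (hν : ν sᶜ = 0) : ∫⁻ x, infEDist x s ^ 2 ∂η ≤ W2sq η ν := by
  refine le_iInf₂ fun π ⟨hπ₁, hπ₂⟩ => ?_
  have hsnd : ∀ᵐ p ∂π, p.2 ∈ s := by
    change π (Prod.snd ⁻¹' s)ᶜ = 0
    rwa [← Set.preimage_compl, ← Measure.map_apply measurable_snd hs.compl, hπ₂]
  calc ∫⁻ x, infEDist x s ^ 2 ∂η = ∫⁻ p, infEDist p.1 s ^ 2 ∂π := by
        rw [← hπ₁, lintegral_map (continuous_infEDist.measurable.pow_const 2) measurable_fst]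
    _ ≤ ∫⁻ p, edist p.1 p.2 ^ 2 ∂π :=
        lintegral_mono_ae <| hsnd.mono fun p hp => by gcongr; exact infEDist_le_edist_of_mem hp

theorem ofReal_sq_mul_measure_compl_thickening_le_lintegral (η : Measure α) (s : Set α) (r : ℝ) :
    ENNReal.ofReal r ^ 2 * η (thickening r s)ᶜ ≤ ∫⁻ x, infEDist x s ^ 2 ∂η := by
  refine le_trans ?_ (mul_meas_ge_le_lintegral₀
    (continuous_infEDist.measurable.pow_const 2).aemeasurable (ENNReal.ofReal r ^ 2))
  gcongr
  intro x hx
  rw [Set.mem_compl_iff, mem_thickening_iff_infEDist_lt, not_lt] at hx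
  exact pow_le_pow_left₀ zero_le hx 2

theorem ofReal_sq_div_two_le_W2sq {η ν : Measure α} [IsProbabilityMeasure η] {s : Set α}
    (hs : MeasurableSet s) (hν : ν sᶜ = 0) {r : ℝ} (hr : η (thickening r s) ≤ 2⁻¹) :
    ENNReal.ofReal r ^ 2 * 2⁻¹ ≤ W2sq η ν := by
  have hfar : 2⁻¹ ≤ η (thickening r s)ᶜ := by
    rw [prob_compl_eq_one_sub isOpen_thickening.measurableSet, ← ENNReal.one_sub_inv_two]
    gcongr
  calc ENNReal.ofReal r ^ 2 * 2⁻¹ ≤ ENNReal.ofReal r ^ 2 * η (thickening r s)ᶜ := by gcongr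
    _ ≤ ∫⁻ x, infEDist x s ^ 2 ∂η := ofReal_sq_mul_measure_compl_thickening_le_lintegral _ _ _
    _ ≤ W2sq η ν := lintegral_infEDist_sq_le_W2sq hs hν

end Wasserstein

section AddHaar

variable {E : Type*} [NormedAddCommGroup E] [NormedSpace ℝ E] [MeasurableSpace E] [BorelSpace E]
  [FiniteDimensional ℝ E] [Nontrivial E] (μ : Measure E) [μ.IsAddHaarMeasure]

open Module

theorem addHaar_thickening_finset_le (F : Finset E) {r : ℝ} (hr : 0 ≤ r) :
    μ (thickening r (F : Set E)) ≤ F.card * (ENNReal.ofReal (r ^ finrank ℝ E) * μ (ball 0 1)) := by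
  rw [thickening_eq_biUnion_ball]
  calc μ (⋃ x ∈ (F : Set E), ball x r) ≤ ∑ x ∈ F, μ (ball x r) := measure_biUnion_finset_le F _
    _ = F.card * (ENNReal.ofReal (r ^ finrank ℝ E) * μ (ball 0 1)) := by
        simp only [Measure.addHaar_ball μ _ hr, Finset.sum_const, nsmul_eq_mul]

theorem cond_thickening_finset_le (X : Set E) (F : Finset E) {r : ℝ} (hr : 0 ≤ r) :
    μ[|X] (thickening r (F : Set E)) ≤
      F.card * ENNReal.ofReal (r ^ finrank ℝ E) * ((μ X)⁻¹ * μ (ball 0 1)) := by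
  calc μ[|X] (thickening r (F : Set E)) ≤ (μ X)⁻¹ * μ (thickening r (F : Set E)) := by
        rw [ProbabilityTheory.cond, Measure.smul_apply, smul_eq_mul]
        exact mul_le_mul_right (Measure.restrict_apply_le X _) _
    _ ≤ (μ X)⁻¹ * (F.card * (ENNReal.ofReal (r ^ finrank ℝ E) * μ (ball 0 1))) := by
        gcongr
        exact addHaar_thickening_finset_le μ F hr
    _ = _ := by ring

end AddHaar

theorem ofReal_div_two_sq_le (r : ℝ) :
    ENNReal.ofReal (r / 2) ^ 2 ≤ ENNReal.ofReal r ^ 2 * 2⁻¹ := by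
  rw [ENNReal.ofReal_div_of_pos two_pos, ENNReal.ofReal_ofNat, div_eq_mul_inv, mul_pow]
  gcongr
  exact pow_le_of_le_one zero_le (ENNReal.inv_le_one.2 one_le_two) two_ne_zero

theorem exists_pos_ofReal_pow_mul_le {K : ℝ≥0∞} (hK : K ≠ ∞) {d : ℕ} (hd : d ≠ 0) {ε : ℝ≥0∞}
    (hε : 0 < ε) : ∃ a : ℝ, 0 < a ∧ ENNReal.ofReal (a ^ d) * K ≤ ε := by
  have hlim : Tendsto (fun a : ℝ => ENNReal.ofReal (a ^ d) * K) (𝓝[>] 0) (𝓝 0) := by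
    have := ENNReal.Tendsto.mul_const
      ((ENNReal.continuous_ofReal.comp (continuous_pow d)).tendsto 0) (Or.inr hK)
    simpa [zero_pow hd] using this.mono_left nhdsWithin_le_nhds
  exact ((hlim.eventually (ge_mem_nhds hε)).and self_mem_nhdsWithin).exists.imp
    fun a ⟨h, ha⟩ => ⟨ha, h⟩

theorem natCast_mul_ofReal_mul_rpow_pow (a : ℝ) {N d : ℕ} (hN : N ≠ 0) (hd : d ≠ 0) :
    (N : ℝ≥0∞) * ENNReal.ofReal ((a * (N : ℝ) ^ (-(1 : ℝ) / d)) ^ d) = ENNReal.ofReal (a ^ d) := by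
  have hpow : ((N : ℝ) ^ (-(1 : ℝ) / d)) ^ d = (N : ℝ)⁻¹ := by
    rw [← Real.rpow_natCast, ← Real.rpow_mul (Nat.cast_nonneg N),
      div_mul_cancel₀ _ (Nat.cast_ne_zero.mpr hd), Real.rpow_neg_one]
  rw [← ENNReal.ofReal_natCast, ← ENNReal.ofReal_mul (Nat.cast_nonneg N), mul_pow, hpow,
    mul_left_comm, mul_inv_cancel₀ (Nat.cast_ne_zero.mpr hN), mul_one]

/-- If `X ⊂ ℝ^d` is a compact domain of positive Lebesgue measure and `Leb`
is the normalized Lebesgue measure on `X`, then there is `c > 0` (depending only on `X`, `d`)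
such that `W₂(Leb, ν) ≥ c·N^{−1/d}` for every probability measure `ν` supported on at most `N`
points. -/
theorem stmt_15 (d : ℕ) (hd : 1 ≤ d) (X : Set (Euc d)) (hX : IsCompact X)
    (hXpos : 0 < volume X)
    (Leb : Measure (Euc d)) (hLeb : Leb = (volume X)⁻¹ • volume.restrict X) :
    ∃ c : ℝ, 0 < c ∧ ∀ N : ℕ, 1 ≤ N → ∀ ν : Measure (Euc d), IsProbabilityMeasure ν →
      (∃ F : Finset (Euc d), F.card ≤ N ∧ ν (↑F : Set (Euc d))ᶜ = 0) →
      ENNReal.ofReal (c * (N : ℝ) ^ (-(1 : ℝ) / d)) ^ 2 ≤ W2sq Leb ν := by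
  have hd0 : d ≠ 0 := by omega
  have : Nontrivial (Euc d) := by
    have : Nonempty (Fin d) := ⟨⟨0, hd⟩⟩
    infer_instance
  obtain rfl : Leb = volume[|X] := hLeb
  have := cond_isProbabilityMeasure_of_finite hXpos.ne' hX.measure_lt_top.ne
  set K := (volume X)⁻¹ * volume (ball (0 : Euc d) 1)
  have hK : K ≠ ∞ := ENNReal.mul_ne_top (ENNReal.inv_ne_top.mpr hXpos.ne') measure_ball_lt_top.ne
  obtain ⟨a, ha, haK⟩ := exists_pos_ofReal_pow_mul_le hK hd0 (ε := 2⁻¹) (by norm_num)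
  refine ⟨a / 2, by positivity, fun N hN ν _ ⟨F, hFN, hνF⟩ => ?_⟩
  set r : ℝ := a * (N : ℝ) ^ (-(1 : ℝ) / d)
  have hnear : volume[|X] (thickening r (F : Set (Euc d))) ≤ 2⁻¹ := by
    have hcover := cond_thickening_finset_le volume X F (r := r) (by positivity)
    rw [finrank_euclideanSpace_fin] at hcover
    calc volume[|X] (thickening r F) ≤ F.card * ENNReal.ofReal (r ^ d) * K := hcover
      _ ≤ N * ENNReal.ofReal (r ^ d) * K := by gcongr
      _ = ENNReal.ofReal (a ^ d) * K := by
          rw [natCast_mul_ofReal_mul_rpow_pow a (by omega) hd0]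
      _ ≤ 2⁻¹ := haK
  calc ENNReal.ofReal (a / 2 * (N : ℝ) ^ (-(1 : ℝ) / d)) ^ 2 ≤ ENNReal.ofReal r ^ 2 * 2⁻¹ := by
        rw [div_mul_eq_mul_div]
        exact ofReal_div_two_sq_le r
    _ ≤ W2sq volume[|X] ν := ofReal_sq_div_two_le_W2sq F.finite_toSet.measurableSet hνF hnear

end
end

section
/- Let X ⊂ ℝ^d be a compact domain, Leb the Lebesgue measure restricted to X normalized to mass 1, P_N = (P_1, …, P_N) a measurable partition of X with Leb(P_j) = 1/N, and M_N the space of maps X → ℝ^d constant on each P_j. Let m ∈ M_N have pairwise distinct values x_j on P_j, and suppose (V_1, …, V_N) is a measurable partition of X with Leb(V_j) = 1/N for all j realizing the optimal transport from Leb to m#Leb, i.e. Σ_{1≤j≤N} ∫_{V_j} |x_j − x|² dLeb(x) = W₂²(m#Leb, Leb). Define G ∈ M_N by G := −2·bary(V_j) on P_j, where bary(V_j) := N·∫_{V_j} x dLeb(x), and define F : M_N → ℝ by F(u) := W₂²(u#Leb, Leb) − ‖u‖²_{L²(X,ℝ^d;Leb)}. Then for every m' ∈ M_N, F(m') ≤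 F(m) + ⟨m' − m, G⟩_{L²(X,ℝ^d;Leb)}; that is, G is a supergradient of the concave function F at m. -/
open MeasureTheory Set
open scoped ENNReal NNReal RealInnerProductSpace

noncomputable section

/-- piecewise constant function -/
def pc {d N : ℕ} (A : Fin N → Set (Euc d)) (y : Fin N → Euc d) : Euc d → Euc d :=
  fun p => ∑ j, (A j).indicator (fun _ => y j) p

lemma pc_meas {d N : ℕ} {A : Fin N → Set (Euc d)} (hA : ∀ j, MeasurableSet (A j))
    (y : Fin N → Euc d) : Measurable (pc A y) := by
  exact Finset.measurable_sum _ fun j _ => measurable_const.indicator (hA j)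

lemma pc_eq {d N : ℕ} {A : Fin N → Set (Euc d)} (hdisj : Pairwise (Function.onFun Disjoint A))
    (y : Fin N → Euc d) {j : Fin N} {p : Euc d} (hp : p ∈ A j) : pc A y p = y j := by
  unfold pc
  rw [Finset.sum_eq_single j]
  · exact Set.indicator_of_mem hp _
  · intro k _ hk
    have : p ∉ A k := fun hpk => (hdisj hk).le_bot ⟨hpk, hp⟩
    exact Set.indicator_of_notMem this _
  · simp

lemma map_pc {d N : ℕ} (μ : Measure (Euc d)) {A : Fin N → Set (Euc d)}
    (hA : ∀ j, MeasurableSet (A j)) (hdisj : Pairwise (Function.onFun Disjoint A))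
    (hnull : μ (⋃ j, A j)ᶜ = 0) (y : Fin N → Euc d) :
    Measure.map (pc A y) μ = ∑ j, μ (A j) • Measure.dirac (y j) := by
  ext s hs
  rw [Measure.map_apply (pc_meas hA y) hs]
  have h1 : μ (pc A y ⁻¹' s) = μ ((pc A y ⁻¹' s) ∩ ⋃ j, A j) := (measure_inter_conull hnull).symm
  have hdisj2 : Pairwise (Function.onFun Disjoint (fun i => pc A y ⁻¹' s ∩ A i)) :=
    fun i k hik => ((hdisj hik).mono Set.inter_subset_right Set.inter_subset_right)
  have h2 := measure_iUnion (μ := μ) hdisj2 (fun j => ((pc_meas hA y) hs).inter (hA j))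
  rw [h1, Set.inter_iUnion, h2, tsum_fintype]
  rw [Measure.finset_sum_apply]
  refine Finset.sum_congr rfl fun j _ => ?_
  rw [Measure.smul_apply, Measure.dirac_apply' _ hs]
  by_cases hyj : y j ∈ s
  · have : pc A y ⁻¹' s ∩ A j = A j := by
      ext p; constructor
      · exact fun h => h.2
      · exact fun hp => ⟨by simp [Set.mem_preimage, pc_eq hdisj y hp, hyj], hp⟩
    rw [this]
    simp [Set.indicator_of_mem hyj]
  · have : pc A y ⁻¹' s ∩ A j = ∅ := by
      ext p
      simp only [Set.mem_inter_iff, Set.mem_preimage, Set.mem_empty_iff_false, iff_false, not_and]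
      intro hps hpj
      exact hyj (by rwa [pc_eq hdisj y hpj] at hps)
    rw [this]
    simp [Set.indicator_of_notMem hyj]

lemma sum_indicator_eq {α : Type*} {E : Type*} [AddCommMonoid E] {N : ℕ} {A : Fin N → Set α}
    (hdisj : Pairwise (Function.onFun Disjoint A)) (c : Fin N → E) {j : Fin N} {p : α}
    (hp : p ∈ A j) : ∑ k, (A k).indicator (fun _ => c k) p = c j := by
  rw [Finset.sum_eq_single j]
  · exact Set.indicator_of_mem hp _
  · intro k _ hk
    have : p ∉ A k := fun hpk => (hdisj hk).le_bot ⟨hpk, hp⟩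
    exact Set.indicator_of_notMem this _
  · simp

/-- The concave functional `F(u) := W₂²(u#Leb, Leb) − ‖u‖²_{L²}`. -/
def Ffun {d : ℕ} (Leb : Measure (Euc d)) (u : Euc d → Euc d) : ℝ :=
  (W2sq (Measure.map u Leb) Leb).toReal - ∫ x, ‖u x‖ ^ 2 ∂Leb

/-- If `m ∈ M_N` has pairwise distinct values `x_j` on the regions `P_j`,
and `(V_j)` is an equal-mass partition realizing the optimal transport from `Leb` to `m#Leb`,
then the piecewise-constant map `G := −2·bary(V_j)` on `P_j` is a supergradient at `m` of the
concave functional `F(u) = W₂²(u#Leb, Leb) − ‖u‖²`: for every `m' ∈ M_N`,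
`F(m') ≤ F(m) + ⟨m' − m, G⟩_{L²}`. -/
theorem stmt_18 {d N : ℕ} (hd : 1 ≤ d) (hN : 1 ≤ N)
    (X : Set (Euc d)) (hX : IsCompact X)
    (Leb : Measure (Euc d)) (hprob : IsProbabilityMeasure Leb)
    (hLeb : Leb = (volume X)⁻¹ • volume.restrict X)
    (P : Fin N → Set (Euc d)) (hPmeas : ∀ j, MeasurableSet (P j))
    (hPmass : ∀ j, Leb (P j) = 1 / N)
    (hPdisj : Pairwise (Function.onFun Disjoint P)) (hPcover : (⋃ j, P j) = X)
    -- `m ∈ M_N`, measurable, with pairwise distinct values `x j` on the regions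
    (m : Euc d → Euc d) (hmMeas : Measurable m)
    (x : Fin N → Euc d) (hm : ∀ j, ∀ p ∈ P j, m p = x j) (hx : Function.Injective x)
    -- `(V_j)` is an equal-mass measurable partition of `X` realizing the optimal
    -- transport from `Leb` to `m#Leb`
    (V : Fin N → Set (Euc d)) (hVmeas : ∀ j, MeasurableSet (V j))
    (hVmass : ∀ j, Leb (V j) = 1 / N)
    (hVdisj : Pairwise (Function.onFun Disjoint V)) (hVcover : (⋃ j, V j) = X)
    (hVopt : ENNReal.ofReal (∑ j, ∫ p in V j, ‖x j - p‖ ^ 2 ∂Leb) =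
      W2sq (Measure.map m Leb) Leb)
    -- `G` is the piecewise-constant map with value `−2·bary(V_j)` on `P_j`
    (G : Euc d → Euc d)
    (hG : ∀ j, ∀ p ∈ P j, G p = (-2 : ℝ) • ((N : ℝ) • ∫ q in V j, q ∂Leb)) :
    ∀ m' ∈ MNsp P,
      Ffun Leb m' ≤ Ffun Leb m + ∫ p, ⟪m' p - m p, G p⟫ ∂Leb := by
  classical
  intro m' hm'
  choose x' hx' using hm'
  have hNR : (N : ℝ) ≠ 0 := Nat.cast_ne_zero.mpr (by omega)
  have hXmeas : MeasurableSet X := hX.isClosed.measurableSet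
  -- basic measure facts
  have hvolX0 : volume X ≠ 0 := by
    intro h
    have h1 := hprob.measure_univ
    rw [hLeb] at h1
    simp [h, Measure.smul_apply, Measure.restrict_apply_univ] at h1
  have hXnull : Leb Xᶜ = 0 := by
    rw [hLeb]
    simp [Measure.smul_apply, Measure.restrict_apply hXmeas.compl]
  have aeX : ∀ᵐ p ∂Leb, p ∈ X := by
    rw [ae_iff]
    exact hXnull
  have aeP : ∀ᵐ p ∂Leb, p ∈ ⋃ j, P j := by rw [hPcover]; exact aeX
  have aeV : ∀ᵐ p ∂Leb, p ∈ ⋃ j, V j := by rw [hVcover]; exact aeX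
  have nullP : Leb (⋃ j, P j)ᶜ = 0 := by rw [hPcover]; exact hXnull
  have nullV : Leb (⋃ j, V j)ᶜ = 0 := by rw [hVcover]; exact hXnull
  -- integrability of continuous functions
  have key : ∀ {E : Type} [NormedAddCommGroup E] (f : Euc d → E), Continuous f →
      Integrable f Leb := by
    intro E _ f hf
    rw [hLeb]
    refine Integrable.smul_measure ?_ (by simp [hvolX0])
    exact hf.continuousOn.integrableOn_compact hX
  have intId : Integrable (fun p : Euc d => p) Leb := key _ continuous_id
  have intSq : ∀ c : Euc d, Integrable (fun p => ‖c - p‖ ^ 2) Leb := by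
    intro c
    exact key _ ((continuous_const.sub continuous_id).norm.pow 2)
  -- mass in ℝ
  have hPmassR : ∀ j, (Leb (P j)).toReal = 1 / (N : ℝ) := by
    intro j
    rw [hPmass j]
    simp [ENNReal.toReal_div]
  have hVmassR : ∀ j, (Leb (V j)).toReal = 1 / (N : ℝ) := by
    intro j
    rw [hVmass j]
    simp [ENNReal.toReal_div]
  set Iv : Fin N → Euc d := fun j => ∫ q in V j, q ∂Leb with hIv
  set b : Fin N → Euc d := fun j => (-2 : ℝ) • ((N : ℝ) • Iv j) with hb
  -- L² norms as sums
  have hL2 : ∀ (u : Euc d → Euc d) (y : Fin N → Euc d), (∀ j, ∀ p ∈ P j, u p = y j) →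
      ∫ p, ‖u p‖ ^ 2 ∂Leb = ∑ j, (1 / (N : ℝ)) * ‖y j‖ ^ 2 := by
    intro u y hy
    have hcongr : (fun p => ‖u p‖ ^ 2) =ᵐ[Leb]
        (fun p => ∑ j, (P j).indicator (fun _ => ‖y j‖ ^ 2) p) := by
      filter_upwards [aeP] with p hp
      obtain ⟨j, hj⟩ := Set.mem_iUnion.mp hp
      rw [hy j p hj, sum_indicator_eq hPdisj _ hj]
    rw [integral_congr_ae hcongr,
      integral_finset_sum _ (fun j _ => (integrable_const _).indicator (hPmeas j))]
    refine Finset.sum_congr rfl fun j _ => ?_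
    rw [integral_indicator_const _ (hPmeas j), measureReal_def, hPmassR j, smul_eq_mul]
  -- the inner product term as a sum
  have hInner : ∫ p, ⟪m' p - m p, G p⟫ ∂Leb =
      ∑ j, (1 / (N : ℝ)) * ⟪x' j - x j, b j⟫ := by
    have hcongr : (fun p => ⟪m' p - m p, G p⟫) =ᵐ[Leb]
        (fun p => ∑ j, (P j).indicator (fun _ => (⟪x' j - x j, b j⟫ : ℝ)) p) := by
      filter_upwards [aeP] with p hp
      obtain ⟨j, hj⟩ := Set.mem_iUnion.mp hp
      rw [hx' j p hj, hm j p hj, hG j p hj, sum_indicator_eq hPdisj _ hj]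
    rw [integral_congr_ae hcongr,
      integral_finset_sum _ (fun j _ => (integrable_const _).indicator (hPmeas j))]
    refine Finset.sum_congr rfl fun j _ => ?_
    rw [integral_indicator_const _ (hPmeas j), measureReal_def, hPmassR j, smul_eq_mul]
  have hInner2 : ∀ j : Fin N, (1 / (N : ℝ)) * ⟪x' j - x j, b j⟫ =
      -2 * ⟪x' j - x j, Iv j⟫ := by
    intro j
    rw [hb]
    simp only [real_inner_smul_right]
    field_simp
  -- cost integrals over V j
  have hVcost : ∀ (c : Euc d) (j : Fin N), ∫ p in V j, ‖c - p‖ ^ 2 ∂Leb =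
      (1 / (N : ℝ)) * ‖c‖ ^ 2 - 2 * ⟪c, Iv j⟫ + ∫ p in V j, ‖p‖ ^ 2 ∂Leb := by
    intro c j
    have h1 : ∀ p : Euc d, ‖c - p‖ ^ 2 = ‖c‖ ^ 2 - 2 * ⟪c, p⟫ + ‖p‖ ^ 2 := fun p =>
      norm_sub_sq_real c p
    rw [integral_congr_ae (ae_of_all _ fun p => h1 p)]
    have i1 : Integrable (fun _ : Euc d => ‖c‖ ^ 2) (Leb.restrict (V j)) := integrable_const _
    have i2 : Integrable (fun p : Euc d => 2 * ⟪c, p⟫) (Leb.restrict (V j)) :=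
      ((intId.restrict (s := V j)).const_inner c).const_mul 2
    have i3 : Integrable (fun p : Euc d => ‖p‖ ^ 2) (Leb.restrict (V j)) :=
      (key _ (continuous_norm.pow 2)).restrict
    have i12 : Integrable (fun p : Euc d => ‖c‖ ^ 2 - 2 * ⟪c, p⟫) (Leb.restrict (V j)) :=
      i1.sub i2
    rw [integral_add i12 i3, integral_sub i1 i2, setIntegral_const,
      integral_const_mul, ← integral_inner (intId.restrict (s := V j)) c, measureReal_def, hVmassR j, smul_eq_mul]
  -- value of W2sq at m
  have sumnn : ∀ y : Fin N → Euc d, 0 ≤ ∑ j, ∫ p in V j, ‖y j - p‖ ^ 2 ∂Leb := by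
    intro y
    exact Finset.sum_nonneg fun j _ => integral_nonneg fun p => by positivity
  have hW2m : (W2sq (Measure.map m Leb) Leb).toReal = ∑ j, ∫ p in V j, ‖x j - p‖ ^ 2 ∂Leb := by
    rw [← hVopt, ENNReal.toReal_ofReal (sumnn x)]
  -- upper bound for W2sq at m'
  have hmapm' : Measure.map m' Leb = Measure.map (pc V x') Leb := by
    have e1 : m' =ᵐ[Leb] pc P x' := by
      filter_upwards [aeP] with p hp
      obtain ⟨j, hj⟩ := Set.mem_iUnion.mp hp
      rw [hx' j p hj, pc_eq hPdisj x' hj]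
    rw [Measure.map_congr e1, map_pc Leb hPmeas hPdisj nullP x',
      map_pc Leb hVmeas hVdisj nullV x']
    refine Finset.sum_congr rfl fun j _ => ?_
    rw [hPmass j, hVmass j]
  have hg : Measurable (fun p : Euc d => (pc V x' p, p)) :=
    (pc_meas hVmeas x').prodMk measurable_id
  have hcost : ∫⁻ q, edist q.1 q.2 ^ 2 ∂(Leb.map (fun p => (pc V x' p, p))) =
      ENNReal.ofReal (∑ j, ∫ p in V j, ‖x' j - p‖ ^ 2 ∂Leb) := by
    rw [lintegral_map (measurable_edist.pow_const 2) hg]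
    have split := lintegral_add_compl (fun p => edist (pc V x' p) p ^ 2)
      (MeasurableSet.iUnion hVmeas) (μ := Leb)
    rw [← split, setLIntegral_measure_zero _ _ nullV, add_zero,
      lintegral_iUnion hVmeas hVdisj, tsum_fintype,
      ENNReal.ofReal_sum_of_nonneg (fun j _ => integral_nonneg fun p => by positivity)]
    refine Finset.sum_congr rfl fun j _ => ?_
    have e2 : ∫⁻ p in V j, edist (pc V x' p) p ^ 2 ∂Leb =
        ∫⁻ p in V j, ENNReal.ofReal (‖x' j - p‖ ^ 2) ∂Leb := by
      refine setLIntegral_congr_fun (hVmeas j) (fun p hp => ?_)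
      rw [pc_eq hVdisj x' hp, edist_dist, dist_eq_norm]
      exact (ENNReal.ofReal_pow (norm_nonneg _) 2).symm
    rw [e2, ← ofReal_integral_eq_lintegral_ofReal ((intSq (x' j)).restrict)
      (ae_of_all _ fun p => by positivity)]
  have hW2bound : W2sq (Measure.map m' Leb) Leb ≤
      ENNReal.ofReal (∑ j, ∫ p in V j, ‖x' j - p‖ ^ 2 ∂Leb) := by
    unfold W2sq
    refine iInf_le_of_le (Leb.map (fun p => (pc V x' p, p))) (iInf_le_of_le ⟨?_, ?_⟩ hcost.le)
    · rw [Measure.map_map measurable_fst hg]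
      exact hmapm'.symm
    · rw [Measure.map_map measurable_snd hg]
      have : (Prod.snd ∘ fun p : Euc d => (pc V x' p, p)) = id := rfl
      rw [this, Measure.map_id]
  have hW2m' : (W2sq (Measure.map m' Leb) Leb).toReal ≤
      ∑ j, ∫ p in V j, ‖x' j - p‖ ^ 2 ∂Leb :=
    ENNReal.toReal_le_of_le_ofReal (sumnn x') hW2bound
  -- combine
  have hcomb : (∑ j, ∫ p in V j, ‖x' j - p‖ ^ 2 ∂Leb) - ∑ j, (1 / (N : ℝ)) * ‖x' j‖ ^ 2 =
      (∑ j, ∫ p in V j, ‖x j - p‖ ^ 2 ∂Leb) - (∑ j, (1 / (N : ℝ)) * ‖x j‖ ^ 2)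
        + ∑ j, (1 / (N : ℝ)) * ⟪x' j - x j, b j⟫ := by
    rw [← Finset.sum_sub_distrib, ← Finset.sum_sub_distrib, ← Finset.sum_add_distrib]
    refine Finset.sum_congr rfl fun j _ => ?_
    rw [hVcost (x' j) j, hVcost (x j) j, hInner2 j, inner_sub_left]
    ring
  rw [Ffun, Ffun, hL2 m' x' hx', hL2 m x hm, hInner, hW2m]
  linarith [hcomb, hW2m']

end
end
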